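/- arXiv:2304.09839 — 8 statements merged into one kernel-verified Lean document; each statement's English description precedes it below -/
import Mathlib

section
/- Let n, ℓ, δ be positive integers with 2δ < ℓ, ℓ ∣ n and n = 2ℓ (so there are b = 2 blocks). If C ⊆ 𝔽₂ⁿ is a code that detects up to δ deletions per block, then |C| ≤ 2^{n−2δ} (equivalently, its redundancy satisfies r ≥ 2δ). -/
/-- The `i`-th bit (0-indexed) of `x ∈ 𝔽₂ⁿ`, with default `false` out of range. -/
def bitAt (n : ℕ) (x : Fin n → Bool) (i : ℕ) : Bool :=
  if h : i < n then x ⟨i, h⟩ else false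

/-- The `j`-th block (1-indexed, of length `ℓ`) of `x ∈ 𝔽₂ⁿ`, as a list. -/
def blockList (n ℓ : ℕ) (x : Fin n → Bool) (j : ℕ) : List Bool :=
  (List.range ℓ).map (fun i => bitAt n x ((j - 1) * ℓ + i))

/-- `y` is a `δ`-per-block deletion output of `x` with deletion pattern `d`:
`y = ⟨y¹,…,y^b⟩` where each `y^j` is a subsequence of block `j` of `x`
of length `ℓ - d j`, with `d j ≤ δ`. -/
def IsDelOutput (n ℓ δ : ℕ) (x : Fin n → Bool) (d : ℕ → ℕ) (y : List Bool) : Prop :=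
  ∃ ys : ℕ → List Bool,
    (∀ j ∈ Finset.Icc 1 (n / ℓ),
      (ys j).Sublist (blockList n ℓ x j) ∧ d j ≤ δ ∧ (ys j).length = ℓ - d j) ∧
    y = ((List.range (n / ℓ)).map (fun j => ys (j + 1))).flatten

/-- `C ⊆ 𝔽₂ⁿ` detects up to `δ` deletions per block. -/
def Detects (n ℓ δ : ℕ) (C : Set (Fin n → Bool)) : Prop :=
  ∀ x ∈ C, ∀ x' ∈ C, ∀ d d' : ℕ → ℕ, ∀ y : List Bool,
    IsDelOutput n ℓ δ x d y → IsDelOutput n ℓ δ x' d' y →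
    ∀ j ∈ Finset.Icc 1 (n / ℓ), d j = d' j

/-- The 0-indexed starting position `α_j - 1` of block `j` in the output,
given the deletion pattern `d`. -/
def startIdx (ℓ : ℕ) (d : ℕ → ℕ) (j : ℕ) : ℕ :=
  ∑ m ∈ Finset.Icc 1 (j - 1), (ℓ - d m)

/-- The window `(y_{α_j},…,y_{α_j+ℓ-1})` of length `ℓ` of the list `y`
starting at 0-indexed position `s = α_j - 1`. -/
def window (ℓ : ℕ) (y : List Bool) (s : ℕ) : Fin ℓ → Bool :=
  fun i => y.getD (s + i) false

/-- `C` is block-by-block decodable. -/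
def BlockDecodable (n ℓ δ : ℕ) (C : Set (Fin n → Bool)) : Prop :=
  ∃ f : ℕ → (Fin ℓ → Bool) → ℕ,
    (∀ j w, f j w ≤ δ) ∧
    ∀ x ∈ C, ∀ d : ℕ → ℕ, ∀ y : List Bool, IsDelOutput n ℓ δ x d y →
      ∀ j ∈ Finset.Icc 1 (n / ℓ - 1),
        f j (window ℓ y (startIdx ℓ d j)) = d j

/-! ### Auxiliary machinery -/

/-- The segment of `x` of length `t` starting at 0-indexed position `s`. -/
def seg (n : ℕ) (x : Fin n → Bool) (s t : ℕ) : List Bool :=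
  (List.range t).map (fun i => bitAt n x (s + i))

lemma seg_length (n : ℕ) (x : Fin n → Bool) (s t : ℕ) : (seg n x s t).length = t := by
  simp [seg]

lemma seg_append (n : ℕ) (x : Fin n → Bool) (s a b : ℕ) :
    seg n x s (a + b) = seg n x s a ++ seg n x (s + a) b := by
  simp [seg, List.range_add, List.map_map, Function.comp_def, Nat.add_assoc]

lemma seg_one (n : ℕ) (x : Fin n → Bool) (s : ℕ) : seg n x s 1 = [bitAt n x s] := by
  have : List.range 1 = [0] := by simp [List.range_succ]
  simp [seg, this]

lemma seg_cons (n : ℕ) (x : Fin n → Bool) (s t : ℕ) :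
    seg n x s (1 + t) = bitAt n x s :: seg n x (s + 1) t := by
  rw [seg_append, seg_one]; rfl

lemma seg_snoc (n : ℕ) (x : Fin n → Bool) (s t : ℕ) :
    seg n x s (t + 1) = seg n x s t ++ [bitAt n x (s + t)] := by
  rw [seg_append, seg_one]

lemma seg_replicate (n : ℕ) (x : Fin n → Bool) (s t : ℕ) (v : Bool)
    (h : ∀ i < t, bitAt n x (s + i) = v) : seg n x s t = List.replicate t v := by
  rw [List.eq_replicate_iff]
  refine ⟨seg_length n x s t, ?_⟩
  intro b hb
  simp only [seg, List.mem_map, List.mem_range] at hb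
  obtain ⟨i, hi, rfl⟩ := hb
  exact h i hi

lemma blockList_one (n ℓ δ k : ℕ) (x : Fin n → Bool) (hk : ℓ = k + δ) :
    blockList n ℓ x 1 = seg n x 0 k ++ seg n x k δ := by
  have h1 : blockList n ℓ x 1 = seg n x 0 ℓ := by
    simp [blockList, seg]
  rw [h1, hk, seg_append]
  simp

lemma blockList_two (n ℓ δ k : ℕ) (x : Fin n → Bool) (hk : ℓ = k + δ) :
    blockList n ℓ x 2 = seg n x ℓ δ ++ seg n x (ℓ + δ) k := by
  have h1 : blockList n ℓ x 2 = seg n x ℓ (δ + k) := by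
    rw [show δ + k = ℓ by omega]
    simp [blockList, seg]
  rw [h1, seg_append]

lemma mk_out (n ℓ δ : ℕ) (hnl : n / ℓ = 2) (x : Fin n → Bool) (l1 l2 : List Bool)
    (d1 d2 : ℕ) (h1 : l1.Sublist (blockList n ℓ x 1)) (h2 : l2.Sublist (blockList n ℓ x 2))
    (hd1 : d1 ≤ δ) (hd2 : d2 ≤ δ) (hl1 : l1.length = ℓ - d1) (hl2 : l2.length = ℓ - d2) :
    IsDelOutput n ℓ δ x (fun j => if j = 1 then d1 else d2) (l1 ++ l2) := by
  refine ⟨fun j => if j = 1 then l1 else l2, ?_, ?_⟩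
  · intro j hj
    rw [hnl, Finset.mem_Icc] at hj
    obtain ⟨hj1, hj2⟩ := hj
    interval_cases j <;> simp_all
  · rw [hnl]
    simp [List.range_succ]

/-- A detection violation from two equal outputs with different first-block pattern. -/
lemma violation (n ℓ δ : ℕ) (hnl : n / ℓ = 2) (C : Set (Fin n → Bool)) (hC : Detects n ℓ δ C)
    (x x' : Fin n → Bool) (hx : x ∈ C) (hx' : x' ∈ C)
    (l1 l2 l1' l2' : List Bool) (d1 d2 d1' d2' : ℕ)
    (h1 : l1.Sublist (blockList n ℓ x 1)) (h2 : l2.Sublist (blockList n ℓ x 2))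
    (h1' : l1'.Sublist (blockList n ℓ x' 1)) (h2' : l2'.Sublist (blockList n ℓ x' 2))
    (hd1 : d1 ≤ δ) (hd2 : d2 ≤ δ) (hd1' : d1' ≤ δ) (hd2' : d2' ≤ δ)
    (hl1 : l1.length = ℓ - d1) (hl2 : l2.length = ℓ - d2)
    (hl1' : l1'.length = ℓ - d1') (hl2' : l2'.length = ℓ - d2')
    (heq : l1 ++ l2 = l1' ++ l2') (hne : d1 ≠ d1') : False := by
  have o : IsDelOutput n ℓ δ x (fun j => if j = 1 then d1 else d2) (l1 ++ l2) :=
    mk_out n ℓ δ hnl x l1 l2 d1 d2 h1 h2 hd1 hd2 hl1 hl2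
  have o' : IsDelOutput n ℓ δ x' (fun j => if j = 1 then d1' else d2') (l1 ++ l2) := by
    rw [heq]
    exact mk_out n ℓ δ hnl x' l1' l2' d1' d2' h1' h2' hd1' hd2' hl1' hl2'
  have h1mem : (1 : ℕ) ∈ Finset.Icc 1 (n / ℓ) := by
    rw [hnl]; simp
  have := hC x hx x' hx' _ _ (l1 ++ l2) o o' 1 h1mem
  simp only [if_pos rfl] at this
  exact hne this

/-- If the first bit of the B-segment occurs in the A-segment, `x` is self-confusable. -/
lemma self1 (n ℓ δ k : ℕ) (hnl : n / ℓ = 2) (hδ : 1 ≤ δ) (hk : ℓ = k + δ)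
    (C : Set (Fin n → Bool)) (hC : Detects n ℓ δ C) (x : Fin n → Bool) (hx : x ∈ C)
    (hmem : bitAt n x ℓ ∈ seg n x k δ) : False := by
  have hB : seg n x ℓ δ = bitAt n x ℓ :: seg n x (ℓ + 1) (δ - 1) := by
    conv_lhs => rw [show δ = 1 + (δ - 1) by omega]
    rw [seg_cons]
  refine violation n ℓ δ hnl C hC x x hx hx
    (seg n x 0 k ++ [bitAt n x ℓ]) (seg n x (ℓ + 1) (δ - 1) ++ seg n x (ℓ + δ) k)
    (seg n x 0 k) (seg n x ℓ δ ++ seg n x (ℓ + δ) k)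
    (δ - 1) 1 δ 0 ?_ ?_ ?_ ?_ (by omega) (by omega) (le_refl δ) (by omega)
    ?_ ?_ ?_ ?_ ?_ (by omega)
  · rw [blockList_one n ℓ δ k x hk]
    exact List.Sublist.append (List.Sublist.refl _) (List.singleton_sublist.mpr hmem)
  · rw [blockList_two n ℓ δ k x hk]
    refine List.Sublist.append ?_ (List.Sublist.refl _)
    rw [hB]; exact List.sublist_cons_self _ _
  · rw [blockList_one n ℓ δ k x hk]; exact List.sublist_append_left _ _
  · rw [blockList_two n ℓ δ k x hk]
  · simp [seg_length]; omega
  · simp [seg_length]; omega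
  · simp [seg_length]; omega
  · simp [seg_length]; omega
  · rw [hB]; simp

/-- If the last bit of the A-segment occurs in the B-segment, `x` is self-confusable. -/
lemma self2 (n ℓ δ k : ℕ) (hnl : n / ℓ = 2) (hδ : 1 ≤ δ) (hk : ℓ = k + δ)
    (C : Set (Fin n → Bool)) (hC : Detects n ℓ δ C) (x : Fin n → Bool) (hx : x ∈ C)
    (hmem : bitAt n x (k + (δ - 1)) ∈ seg n x ℓ δ) : False := by
  have hA : seg n x k δ = seg n x k (δ - 1) ++ [bitAt n x (k + (δ - 1))] := by
    conv_lhs => rw [show δ = (δ - 1) + 1 by omega]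
    rw [seg_snoc]
  refine violation n ℓ δ hnl C hC x x hx hx
    (seg n x 0 k ++ seg n x k (δ - 1)) (bitAt n x (k + (δ - 1)) :: seg n x (ℓ + δ) k)
    (seg n x 0 k ++ seg n x k δ) (seg n x (ℓ + δ) k)
    1 (δ - 1) 0 δ ?_ ?_ ?_ ?_ (by omega) (by omega) (by omega) (le_refl δ)
    ?_ ?_ ?_ ?_ ?_ (by omega)
  · rw [blockList_one n ℓ δ k x hk]
    refine List.Sublist.append (List.Sublist.refl _) ?_
    rw [hA]; exact List.sublist_append_left _ _
  · rw [blockList_two n ℓ δ k x hk]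
    exact List.Sublist.append (List.singleton_sublist.mpr hmem) (List.Sublist.refl _)
  · rw [blockList_one n ℓ δ k x hk]
  · rw [blockList_two n ℓ δ k x hk]; exact List.sublist_append_right _ _
  · simp [seg_length]; omega
  · simp [seg_length]; omega
  · simp [seg_length]; omega
  · simp [seg_length]; omega
  · rw [hA]; simp

/-- Two codewords with the same outer parts but opposite middle markers are confusable. -/
lemma cross (n ℓ δ k : ℕ) (hnl : n / ℓ = 2) (hδ : 1 ≤ δ) (hk : ℓ = k + δ)
    (C : Set (Fin n → Bool)) (hC : Detects n ℓ δ C) (x x' : Fin n → Bool)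
    (hx : x ∈ C) (hx' : x' ∈ C)
    (hP : seg n x 0 k = seg n x' 0 k) (hQ : seg n x (ℓ + δ) k = seg n x' (ℓ + δ) k)
    (hA : seg n x k δ = List.replicate δ false) (hB : seg n x ℓ δ = List.replicate δ true)
    (hA' : seg n x' k δ = List.replicate δ true) (hB' : seg n x' ℓ δ = List.replicate δ false) :
    False := by
  refine violation n ℓ δ hnl C hC x x' hx hx'
    (seg n x 0 k ++ [false]) (seg n x (ℓ + δ) k)
    (seg n x' 0 k) (false :: seg n x' (ℓ + δ) k)
    (δ - 1) δ δ (δ - 1) ?_ ?_ ?_ ?_ (by omega) (le_refl δ) (le_refl δ) (by omega)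
    ?_ ?_ ?_ ?_ ?_ (by omega)
  · rw [blockList_one n ℓ δ k x hk, hA]
    refine List.Sublist.append (List.Sublist.refl _) ?_
    exact List.singleton_sublist.mpr (List.mem_replicate.mpr ⟨by omega, rfl⟩)
  · rw [blockList_two n ℓ δ k x hk]; exact List.sublist_append_right _ _
  · rw [blockList_one n ℓ δ k x' hk]; exact List.sublist_append_left _ _
  · rw [blockList_two n ℓ δ k x' hk, hB']
    rw [show δ = (δ - 1) + 1 by omega, List.replicate_succ, List.cons_append]
    exact List.Sublist.cons₂ _ (List.sublist_append_right _ _)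
  · simp [seg_length]; omega
  · simp [seg_length]; omega
  · simp [seg_length]; omega
  · simp [seg_length]; omega
  · rw [← hP, ← hQ]; simp

/-- For b = 2 blocks (n = 2l, 2d < l), any code C in F_2^n
detecting up to d deletions per block satisfies |C| <= 2^(n-2d). -/
theorem redundancy_lower_bound_two_blocks
    (n ℓ δ : ℕ) (hδ : 0 < δ) (hℓ : 2 * δ < ℓ) (hn : n = 2 * ℓ)
    (C : Set (Fin n → Bool)) (hC : Detects n ℓ δ C) :
    C.ncard ≤ 2 ^ (n - 2 * δ) := by
  subst hn
  obtain ⟨k, hk⟩ : ∃ k, ℓ = k + δ := ⟨ℓ - δ, by omega⟩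
  have hℓ0 : 0 < ℓ := by omega
  have hnl : 2 * ℓ / ℓ = 2 := Nat.mul_div_cancel 2 hℓ0
  -- Step 1: every codeword has A = replicate δ (!c) and B = replicate δ c, c its middle bit.
  have key1 : ∀ x ∈ C, ∀ i < δ, bitAt (2 * ℓ) x (k + i) = !(bitAt (2 * ℓ) x ℓ) := by
    intro x hx i hi
    by_contra h
    have hb : bitAt (2 * ℓ) x (k + i) = bitAt (2 * ℓ) x ℓ := by
      revert h
      cases bitAt (2 * ℓ) x (k + i) <;> cases bitAt (2 * ℓ) x ℓ <;> simp
    have hmem : bitAt (2 * ℓ) x ℓ ∈ seg (2 * ℓ) x k δ := by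
      rw [← hb]
      exact List.mem_map.mpr ⟨i, List.mem_range.mpr hi, rfl⟩
    exact self1 (2 * ℓ) ℓ δ k hnl hδ hk C hC x hx hmem
  have key2 : ∀ x ∈ C, ∀ i < δ, bitAt (2 * ℓ) x (ℓ + i) = bitAt (2 * ℓ) x ℓ := by
    intro x hx i hi
    by_contra h
    have hb : bitAt (2 * ℓ) x (ℓ + i) = !(bitAt (2 * ℓ) x ℓ) := by
      revert h
      cases bitAt (2 * ℓ) x (ℓ + i) <;> cases bitAt (2 * ℓ) x ℓ <;> simp
    have hlast : bitAt (2 * ℓ) x (k + (δ - 1)) = !(bitAt (2 * ℓ) x ℓ) := key1 x hx (δ - 1) (by omega)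
    have hmem : bitAt (2 * ℓ) x (k + (δ - 1)) ∈ seg (2 * ℓ) x ℓ δ := by
      rw [hlast, ← hb]
      exact List.mem_map.mpr ⟨i, List.mem_range.mpr hi, rfl⟩
    exact self2 (2 * ℓ) ℓ δ k hnl hδ hk C hC x hx hmem
  -- Step 2: the outer-parts map is injective on C.
  set F : (Fin (2 * ℓ) → Bool) → ((Fin k → Bool) × (Fin k → Bool)) :=
    fun x => (fun i => bitAt (2 * ℓ) x i.val, fun i => bitAt (2 * ℓ) x (ℓ + δ + i.val)) with hF
  have hbit : ∀ (z : Fin (2 * ℓ) → Bool) (j : Fin (2 * ℓ)), bitAt (2 * ℓ) z j.val = z j := by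
    intro z j; simp [bitAt]
  have hinj : Set.InjOn F C := by
    intro x hx x' hx' hFeq
    have hp : ∀ i, i < k → bitAt (2 * ℓ) x i = bitAt (2 * ℓ) x' i := by
      intro i hi
      exact congrFun (congrArg Prod.fst hFeq) ⟨i, hi⟩
    have hq : ∀ i, i < k → bitAt (2 * ℓ) x (ℓ + δ + i) = bitAt (2 * ℓ) x' (ℓ + δ + i) := by
      intro i hi
      exact congrFun (congrArg Prod.snd hFeq) ⟨i, hi⟩
    by_cases hcc : bitAt (2 * ℓ) x ℓ = bitAt (2 * ℓ) x' ℓ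
    · funext j
      rw [← hbit x j, ← hbit x' j]
      rcases lt_or_ge j.val k with h1 | h1
      · exact hp j.val h1
      rcases lt_or_ge j.val ℓ with h2 | h2
      · have e : j.val = k + (j.val - k) := by omega
        rw [e, key1 x hx _ (by omega), key1 x' hx' _ (by omega), hcc]
      rcases lt_or_ge j.val (ℓ + δ) with h3 | h3
      · have e : j.val = ℓ + (j.val - ℓ) := by omega
        rw [e, key2 x hx _ (by omega), key2 x' hx' _ (by omega), hcc]
      · have e : j.val = ℓ + δ + (j.val - (ℓ + δ)) := by omega
        have hjk : j.val - (ℓ + δ) < k := by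
          have := j.isLt
          omega
        rw [e]
        exact hq _ hjk
    · exfalso
      have hPs : seg (2 * ℓ) x 0 k = seg (2 * ℓ) x' 0 k := by
        unfold seg
        apply List.map_congr_left
        intro i hi
        rw [List.mem_range] at hi
        simpa using hp i hi
      have hQs : seg (2 * ℓ) x (ℓ + δ) k = seg (2 * ℓ) x' (ℓ + δ) k := by
        unfold seg
        apply List.map_congr_left
        intro i hi
        rw [List.mem_range] at hi
        exact hq i hi
      have hAx : seg (2 * ℓ) x k δ = List.replicate δ (!(bitAt (2 * ℓ) x ℓ)) :=
        seg_replicate (2 * ℓ) x k δ _ (key1 x hx)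
      have hBx : seg (2 * ℓ) x ℓ δ = List.replicate δ (bitAt (2 * ℓ) x ℓ) :=
        seg_replicate (2 * ℓ) x ℓ δ _ (key2 x hx)
      have hAx' : seg (2 * ℓ) x' k δ = List.replicate δ (!(bitAt (2 * ℓ) x' ℓ)) :=
        seg_replicate (2 * ℓ) x' k δ _ (key1 x' hx')
      have hBx' : seg (2 * ℓ) x' ℓ δ = List.replicate δ (bitAt (2 * ℓ) x' ℓ) :=
        seg_replicate (2 * ℓ) x' ℓ δ _ (key2 x' hx')
      cases hc : bitAt (2 * ℓ) x ℓ <;> cases hc' : bitAt (2 * ℓ) x' ℓ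
      · exact hcc (hc.trans hc'.symm)
      · -- x : c = false (A = rep true, B = rep false); x' : c' = true (A' = rep false, B' = rep true)
        refine cross (2 * ℓ) ℓ δ k hnl hδ hk C hC x' x hx' hx hPs.symm hQs.symm ?_ ?_ ?_ ?_
        · rw [hAx', hc']; rfl
        · rw [hBx', hc']
        · rw [hAx, hc]; rfl
        · rw [hBx, hc]
      · refine cross (2 * ℓ) ℓ δ k hnl hδ hk C hC x x' hx hx' hPs hQs ?_ ?_ ?_ ?_
        · rw [hAx, hc]; rfl
        · rw [hBx, hc]
        · rw [hAx', hc']; rfl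
        · rw [hBx', hc']
      · exact hcc (hc.trans hc'.symm)
  -- Step 3: counting.
  calc C.ncard = (F '' C).ncard := (Set.ncard_image_of_injOn hinj).symm
    _ ≤ (Set.univ : Set ((Fin k → Bool) × (Fin k → Bool))).ncard :=
        Set.ncard_le_ncard (Set.subset_univ _) Set.finite_univ
    _ = 2 ^ k * 2 ^ k := by
        rw [Set.ncard_univ]
        simp [Nat.card_eq_fintype_card]
    _ = 2 ^ ((2 * ℓ) - 2 * δ) := by
        rw [← pow_add]
        congr 1
        omega
end

section
/- Let n, ℓ, δ be positive integers with 2δ < ℓ ≤ n/2, ℓ ∣ n and b = n/ℓ ≥ 2. Every code C ⊆ 𝔽₂ⁿ that detects up to δ deletions per block satisfies |C| ≤ 2^{n−2δ(b−1)}; that is, the redundancy of any such code is at least 2δ(n/ℓ − 1). -/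
/-!
Deleting `P + 1` bits just before an inner block boundary and `Q` just after it, or `P` before
and `Q + 1` after, gives deletion patterns that differ on the earlier block; when the two bits
traded are equal the outputs coincide, so a detecting code forbids this whenever `P + Q < δ`.
Hence every codeword reads `c^δ (!c)^δ` on the `2δ` positions around each of the `b - 1` inner
boundaries, with `c` its last bit before the boundary.

Let two codewords agree outside these windows. At every boundary where their bits `c ≠ c'`
differ, delete the `c^δ` of the first and the `(!c')^δ` of the second: the two outputs coincide,
while the deletion patterns are shifted by one block against each other. Detection forces the
patterns to agree, so there is no such boundary, and the codewords are equal. A codeword is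
therefore determined by its `n - 2δ(b - 1)` bits outside the windows.
-/

open Finset

theorem List.flatten_map_range_succ_append {α : Type*} (a c : ℕ → List α) (b : ℕ) :
    ((List.range (b + 1)).map fun m => a m ++ c m).flatten =
      a 0 ++ ((List.range b).map fun m => c m ++ a (m + 1)).flatten ++ c b := by
  induction b with
  | zero => simp
  | succ b ih =>
    rw [List.range_succ, List.map_append, List.flatten_append, ih, List.range_succ]
    simp

section Segment

variable {n : ℕ}

def bitSegment (x : Fin n → Bool) (s len : ℕ) : List Bool :=
  (List.range len).map fun t => bitAt n x (s + t)

variable (x : Fin n → Bool)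

@[simp] theorem length_bitSegment (s len : ℕ) : (bitSegment x s len).length = len := by
  simp [bitSegment]

@[simp] theorem bitSegment_zero (s : ℕ) : bitSegment x s 0 = [] := rfl

theorem bitSegment_add (s p q : ℕ) :
    bitSegment x s (p + q) = bitSegment x s p ++ bitSegment x (s + p) q := by
  simp only [bitSegment, List.range_add, List.map_append, List.map_map]
  congr 2 with t
  simp [add_assoc]

@[simp] theorem bitSegment_one (s : ℕ) : bitSegment x s 1 = [bitAt n x s] := by
  simp [bitSegment]

theorem bitSegment_congr {x' : Fin n → Bool} {s s' len : ℕ}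
    (h : ∀ t < len, bitAt n x (s + t) = bitAt n x' (s' + t)) :
    bitSegment x s len = bitSegment x' s' len :=
  List.map_congr_left fun t ht => h t (List.mem_range.1 ht)

theorem bitSegment_sublist {s len s' len' : ℕ} (hs : s ≤ s') (hlen : s' + len' ≤ s + len) :
    (bitSegment x s' len').Sublist (bitSegment x s len) := by
  obtain ⟨a, rfl⟩ := Nat.exists_eq_add_of_le hs
  obtain ⟨c, hc⟩ := Nat.exists_eq_add_of_le (show a + len' ≤ len by omega)
  rw [hc, bitSegment_add, bitSegment_add, ← add_assoc]
  exact (List.infix_append _ _ _).sublist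

theorem bitSegment_append_bitSegment_shift {s a e c : ℕ} (h : bitAt n x (s + a) = bitAt n x e) :
    bitSegment x s (a + 1) ++ bitSegment x (e + 1) c =
      bitSegment x s a ++ bitSegment x e (c + 1) := by
  rw [bitSegment_add, bitSegment_one, add_comm c, bitSegment_add, bitSegment_one, h]
  simp

end Segment

section Boundary

variable {n : ℕ} (ℓ δ : ℕ) (x : Fin n → Bool) (p q : ℕ → ℕ)

/-- Block `j` with `q (j - 1)` bits deleted at its start and `p j` at its end: `p k` and `q k`
are the numbers of bits deleted just before and just after the boundary `k * ℓ`. -/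
def trimmedBlock (j : ℕ) : List Bool :=
  bitSegment x ((j - 1) * ℓ + q (j - 1)) (ℓ - (q (j - 1) + p j))

def boundaryOutput : List Bool :=
  ((List.range (n / ℓ)).map fun m => trimmedBlock ℓ x p q (m + 1)).flatten

/-- The stretch of the output from the middle of block `k` to the middle of block `k + 1`. -/
def junction (k pk qk : ℕ) : List Bool :=
  bitSegment x ((k - 1) * ℓ + δ) (ℓ - δ - pk) ++ bitSegment x (k * ℓ + qk) (δ - qk)

variable {ℓ δ p q}

theorem isDelOutput_boundaryOutput (hδℓ : δ ≤ ℓ)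
    (h : ∀ j ∈ Icc 1 (n / ℓ), q (j - 1) + p j ≤ δ) :
    IsDelOutput n ℓ δ x (fun j => q (j - 1) + p j) (boundaryOutput ℓ x p q) := by
  refine ⟨trimmedBlock ℓ x p q, fun j hj => ⟨?_, h j hj, length_bitSegment ..⟩, rfl⟩
  have := h j hj
  exact bitSegment_sublist x (by omega) (by omega)

theorem boundaryOutput_eq (h2δ : 2 * δ ≤ ℓ) (hp : ∀ k, p k ≤ δ) (hq : ∀ k, q k ≤ δ)
    {b : ℕ} (hb : n / ℓ = b + 1) :
    boundaryOutput ℓ x p q = bitSegment x (q 0) (δ - q 0) ++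
      ((List.range b).map fun m => junction ℓ δ x (m + 1) (p (m + 1)) (q (m + 1))).flatten ++
      bitSegment x (b * ℓ + δ) (ℓ - δ - p (b + 1)) := by
  have hsplit : ∀ m, trimmedBlock ℓ x p q (m + 1) = bitSegment x (m * ℓ + q m) (δ - q m) ++
      bitSegment x (m * ℓ + δ) (ℓ - δ - p (m + 1)) := by
    intro m
    have := hp (m + 1)
    have := hq m
    rw [trimmedBlock, Nat.add_sub_cancel, show m * ℓ + δ = m * ℓ + q m + (δ - q m) by omega,
      ← bitSegment_add]
    congr 1
    omega
  simp only [boundaryOutput, hb, hsplit, List.flatten_map_range_succ_append, junction,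
    Nat.add_sub_cancel, zero_mul, zero_add]

end Boundary

section Detection

variable {n ℓ δ : ℕ} {C : Set (Fin n → Bool)} {x : Fin n → Bool}

theorem bitAt_ne_of_detects (hC : Detects n ℓ δ C) (hx : x ∈ C) (h2δ : 2 * δ ≤ ℓ)
    {j P Q : ℕ} (hj : 1 ≤ j) (hjb : j < n / ℓ) (hPQ : P + Q < δ) :
    bitAt n x (j * ℓ - (P + 1)) ≠ bitAt n x (j * ℓ + Q) := by
  intro heq
  obtain ⟨b, hb⟩ : ∃ b, n / ℓ = b + 1 := ⟨n / ℓ - 1, by omega⟩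
  have hle : ∀ {P' Q' : ℕ}, P' + Q' ≤ δ →
      ∀ k ∈ Icc 1 (n / ℓ),
        (Pi.single j Q' : ℕ → ℕ) (k - 1) + (Pi.single j P' : ℕ → ℕ) k ≤ δ := by
    intro P' Q' h k _
    simp only [Pi.single_apply]
    split_ifs <;> omega
  have hsingle : ∀ {v : ℕ}, v ≤ δ → ∀ k, (Pi.single j v : ℕ → ℕ) k ≤ δ := by
    intro v hv k
    simp only [Pi.single_apply]
    split_ifs <;> omega
  have hout : boundaryOutput ℓ x (Pi.single j (P + 1)) (Pi.single j Q) =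
      boundaryOutput ℓ x (Pi.single j P) (Pi.single j (Q + 1)) := by
    rw [boundaryOutput_eq x h2δ (hsingle (by omega)) (hsingle (by omega)) hb,
      boundaryOutput_eq x h2δ (hsingle (by omega)) (hsingle (by omega)) hb]
    have hj0 : (0 : ℕ) ≠ j := by omega
    have hjb' : b + 1 ≠ j := by omega
    simp only [Pi.single_apply, hj0, hjb', if_false]
    congr 3
    refine List.map_congr_left fun m _ => ?_
    by_cases hm : m + 1 = j
    · subst hm
      simp only [junction, if_true, Nat.add_sub_cancel]
      rw [show ℓ - δ - P = ℓ - δ - (P + 1) + 1 by omega,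
        show δ - Q = δ - (Q + 1) + 1 by omega]
      refine (bitSegment_append_bitSegment_shift x ?_).symm
      rw [← heq, Nat.succ_mul]
      congr 1
      omega
    · simp [hm]
  have hpat := hC x hx x hx _ _ _ (isDelOutput_boundaryOutput x (by omega) (hle (by omega)))
    (hout ▸ isDelOutput_boundaryOutput x (by omega) (hle (by omega))) j (by simp; omega)
  simp [show j - 1 ≠ j by omega] at hpat

end Detection

section Windows

variable {n ℓ δ : ℕ} {C : Set (Fin n → Bool)} {x x' : Fin n → Bool}

theorem bitAt_eq_of_mem_window (hC : Detects n ℓ δ C) (hx : x ∈ C) (h2δ : 2 * δ ≤ ℓ)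
    {k i : ℕ} (hk : 1 ≤ k) (hkb : k < n / ℓ) (hi₁ : k * ℓ - δ ≤ i)
    (hi₂ : i < k * ℓ + δ) :
    bitAt n x i = if i < k * ℓ then bitAt n x (k * ℓ - 1) else !bitAt n x (k * ℓ - 1) := by
  have hℓk : ℓ ≤ k * ℓ := Nat.le_mul_of_pos_left ℓ hk
  split_ifs with h
  · have hi := bitAt_ne_of_detects hC hx h2δ hk hkb (P := k * ℓ - 1 - i) (Q := 0) (by omega)
    have hlast := bitAt_ne_of_detects hC hx h2δ hk hkb (P := 0) (Q := 0) (by omega)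
    rw [show k * ℓ - (k * ℓ - 1 - i + 1) = i by omega] at hi
    rw [Bool.eq_not.2 hi, Bool.eq_not.2 hlast]
  · have hi := bitAt_ne_of_detects hC hx h2δ hk hkb (P := 0) (Q := i - k * ℓ) (by omega)
    rw [show k * ℓ + (i - k * ℓ) = i by omega] at hi
    exact Bool.eq_not.2 hi.symm

def boundaryWindows (ℓ δ b : ℕ) : Finset ℕ :=
  (Ico 1 b).biUnion fun k => Ico (k * ℓ - δ) (k * ℓ + δ)

theorem eq_of_mem_window (h2δ : 2 * δ ≤ ℓ) {k k' i : ℕ} (hk' : 1 ≤ k')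
    (hi₁ : k' * ℓ - δ ≤ i) (hi₂ : i < k' * ℓ + δ) (hlo : (k - 1) * ℓ + δ ≤ i)
    (hhi : i < k * ℓ + δ) : k' = k := by
  have hℓk : ℓ ≤ k' * ℓ := Nat.le_mul_of_pos_left ℓ hk'
  have h₁ : (k - 1) * ℓ < k' * ℓ := by omega
  have h₂ : k' * ℓ < (k + 1) * ℓ := by rw [Nat.succ_mul]; omega
  have := Nat.lt_of_mul_lt_mul_right h₁
  have := Nat.lt_of_mul_lt_mul_right h₂
  omega

theorem card_boundaryWindows (h2δ : 2 * δ ≤ ℓ) (b : ℕ) :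
    #(boundaryWindows ℓ δ b) = 2 * δ * (b - 1) := by
  rw [boundaryWindows, card_biUnion, sum_congr rfl fun k hk => ?_, sum_const, Nat.card_Ico,
    smul_eq_mul, mul_comm]
  · have := Nat.le_mul_of_pos_left ℓ (mem_Ico.1 hk).1
    rw [Nat.card_Ico]
    omega
  · intro k hk k' hk' hne
    simp only [coe_Ico, Set.mem_Ico] at hk hk'
    refine disjoint_left.2 fun i hi hi' => hne ?_
    simp only [mem_Ico] at hi hi'
    have := Nat.le_mul_of_pos_left ℓ hk.1
    exact eq_of_mem_window h2δ hk.1 hi.1 hi.2 (by rw [Nat.sub_one_mul]; omega) hi'.2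

theorem boundaryWindows_subset_range (h2δ : 2 * δ ≤ ℓ) :
    boundaryWindows ℓ δ (n / ℓ) ⊆ range n := by
  intro i hi
  simp only [boundaryWindows, mem_biUnion, mem_Ico] at hi
  obtain ⟨k, ⟨-, hk⟩, -, hik⟩ := hi
  have : (k + 1) * ℓ ≤ n / ℓ * ℓ := Nat.mul_le_mul_right ℓ hk
  have := Nat.div_mul_le_self n ℓ
  rw [Nat.succ_mul] at *
  simp only [mem_range]
  omega

theorem bitAt_eq_of_boundary_eq (hC : Detects n ℓ δ C) (hx : x ∈ C) (hx' : x' ∈ C)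
    (h2δ : 2 * δ ≤ ℓ)
    (hoff : ∀ i ∉ boundaryWindows ℓ δ (n / ℓ), bitAt n x i = bitAt n x' i) (i : ℕ)
    (hi : ∀ k, 1 ≤ k → k < n / ℓ → k * ℓ - δ ≤ i → i < k * ℓ + δ →
      bitAt n x (k * ℓ - 1) = bitAt n x' (k * ℓ - 1)) :
    bitAt n x i = bitAt n x' i := by
  by_cases hw : i ∈ boundaryWindows ℓ δ (n / ℓ)
  · simp only [boundaryWindows, mem_biUnion, mem_Ico] at hw
    obtain ⟨k, ⟨hk, hkb⟩, hik₁, hik₂⟩ := hw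
    rw [bitAt_eq_of_mem_window hC hx h2δ hk hkb hik₁ hik₂,
      bitAt_eq_of_mem_window hC hx' h2δ hk hkb hik₁ hik₂, hi k hk hkb hik₁ hik₂]
  · exact hoff i hw

end Windows

section Injectivity

variable {n ℓ δ : ℕ} {C : Set (Fin n → Bool)} {x x' : Fin n → Bool}

def boundaryMismatch (ℓ δ : ℕ) (x x' : Fin n → Bool) (k : ℕ) : ℕ :=
  if 1 ≤ k ∧ k < n / ℓ ∧ bitAt n x (k * ℓ - 1) ≠ bitAt n x' (k * ℓ - 1) then δ else 0

theorem boundaryMismatch_le (k : ℕ) : boundaryMismatch ℓ δ x x' k ≤ δ := by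
  unfold boundaryMismatch
  split_ifs <;> omega

theorem junction_boundaryMismatch (hC : Detects n ℓ δ C) (hx : x ∈ C) (hx' : x' ∈ C)
    (h2δ : 2 * δ ≤ ℓ)
    (hoff : ∀ i ∉ boundaryWindows ℓ δ (n / ℓ), bitAt n x i = bitAt n x' i)
    {k : ℕ} (hk : 1 ≤ k) (hkb : k < n / ℓ) :
    junction ℓ δ x k (boundaryMismatch ℓ δ x x' k) 0 =
      junction ℓ δ x' k 0 (boundaryMismatch ℓ δ x x' k) := by
  have hℓk : ℓ ≤ k * ℓ := Nat.le_mul_of_pos_left ℓ hk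
  have hprev : (k - 1) * ℓ + ℓ = k * ℓ := by rw [← Nat.succ_mul]; congr 1; omega
  have hagree := bitAt_eq_of_boundary_eq hC hx hx' h2δ hoff
  unfold junction boundaryMismatch
  by_cases hc : bitAt n x (k * ℓ - 1) = bitAt n x' (k * ℓ - 1)
  · have hall : ∀ i, (k - 1) * ℓ + δ ≤ i → i < k * ℓ + δ →
        bitAt n x i = bitAt n x' i :=
      fun i hlo hhi => hagree _ fun k' hk' _ hi₁ hi₂ =>
        eq_of_mem_window h2δ hk' hi₁ hi₂ hlo hhi ▸ hc
    simp only [hc, ne_eq, not_true_eq_false, and_false, if_false]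
    congr 1 <;> exact bitSegment_congr x fun t ht => hall _ (by omega) (by omega)
  · simp only [hk, hkb, hc, ne_eq, not_false_eq_true, and_self, if_true, Nat.sub_zero,
      Nat.sub_self, add_zero]
    have hsplit : bitSegment x' ((k - 1) * ℓ + δ) (ℓ - δ) = bitSegment x' ((k - 1) * ℓ + δ)
        (ℓ - δ - δ) ++ bitSegment x' ((k - 1) * ℓ + δ + (ℓ - δ - δ)) δ := by
      rw [← bitSegment_add]
      congr 1
      omega
    rw [hsplit, List.append_assoc]
    congr 1
    · refine bitSegment_congr x fun t ht => hagree _ fun k' hk' _ hi₁ hi₂ => ?_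
      obtain rfl := eq_of_mem_window h2δ (k := k) hk' hi₁ hi₂ (by omega) (by omega)
      omega
    · rw [bitSegment_zero, List.append_nil]
      refine bitSegment_congr x fun t ht => ?_
      rw [bitAt_eq_of_mem_window hC hx h2δ hk hkb (by omega) (by omega),
        bitAt_eq_of_mem_window hC hx' h2δ hk hkb (by omega) (by omega)]
      simp only [show ¬ k * ℓ + t < k * ℓ by omega,
        show (k - 1) * ℓ + δ + (ℓ - δ - δ) + t < k * ℓ by omega, if_true, if_false]
      exact (Bool.eq_not.2 (Ne.symm hc)).symm

theorem boundaryOutput_boundaryMismatch (hC : Detects n ℓ δ C) (hx : x ∈ C) (hx' : x' ∈ C)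
    (h2δ : 2 * δ ≤ ℓ)
    (hoff : ∀ i ∉ boundaryWindows ℓ δ (n / ℓ), bitAt n x i = bitAt n x' i) :
    boundaryOutput ℓ x (boundaryMismatch ℓ δ x x') 0 =
      boundaryOutput ℓ x' 0 (boundaryMismatch ℓ δ x x') := by
  by_cases hb : n / ℓ = 0
  · simp [boundaryOutput, hb]
  obtain ⟨b, hb⟩ := Nat.exists_eq_add_one_of_ne_zero hb
  have hagree := bitAt_eq_of_boundary_eq hC hx hx' h2δ hoff
  rw [boundaryOutput_eq (q := 0) x h2δ boundaryMismatch_le (fun _ => Nat.zero_le δ) hb,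
    boundaryOutput_eq (p := 0) x' h2δ (fun _ => Nat.zero_le δ) boundaryMismatch_le hb]
  simp only [Pi.zero_apply, Nat.sub_zero,
    show boundaryMismatch ℓ δ x x' 0 = 0 by simp [boundaryMismatch],
    show boundaryMismatch ℓ δ x x' (b + 1) = 0 by simp [boundaryMismatch, hb]]
  refine congrArg₂ (· ++ ·) (congrArg₂ (· ++ ·) ?_ ?_) ?_
  · refine bitSegment_congr x fun t ht => hagree _ fun k hk _ hi₁ hi₂ => ?_
    have := Nat.le_mul_of_pos_left ℓ hk
    omega
  · refine congrArg List.flatten (List.map_congr_left fun m hm => ?_)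
    exact junction_boundaryMismatch hC hx hx' h2δ hoff (Nat.le_add_left 1 m) (by simp at hm; omega)
  · refine bitSegment_congr x fun t ht => hagree _ fun k hk hkb hi₁ hi₂ => ?_
    have : k * ℓ ≤ b * ℓ := Nat.mul_le_mul_right ℓ (by omega)
    omega

theorem eq_of_eqOn_compl_boundaryWindows (hC : Detects n ℓ δ C) (hx : x ∈ C) (hx' : x' ∈ C)
    (hδ : 0 < δ) (h2δ : 2 * δ ≤ ℓ)
    (hoff : ∀ i ∉ boundaryWindows ℓ δ (n / ℓ), bitAt n x i = bitAt n x' i) : x = x' := by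
  have hpat := hC x hx x' hx' _ _ _
    (isDelOutput_boundaryOutput x (by omega) fun j _ => by simpa using boundaryMismatch_le j)
    (boundaryOutput_boundaryMismatch hC hx hx' h2δ hoff ▸
      isDelOutput_boundaryOutput x' (by omega) fun j _ => by
        simpa using boundaryMismatch_le (j - 1))
  have hzero : ∀ k ≤ n / ℓ, boundaryMismatch ℓ δ x x' k = 0 := by
    intro k hk
    induction k with
    | zero => simp [boundaryMismatch]
    | succ k ih => simpa [ih (by omega)] using hpat (k + 1) (by simp; omega)
  funext i
  have hi := bitAt_eq_of_boundary_eq hC hx hx' h2δ hoff i fun k hk hkb _ _ => by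
    have := hzero k hkb.le
    simp only [boundaryMismatch, hk, hkb, true_and] at this
    split_ifs at this with h
    · omega
    · exact not_not.1 h
  simpa [bitAt] using hi

end Injectivity

theorem ncard_le_two_pow_of_injOn_bitAt {n : ℕ} {C : Set (Fin n → Bool)} (S : Finset ℕ)
    (h : Set.InjOn (fun x (i : S) => bitAt n x i) C) : C.ncard ≤ 2 ^ #S := by
  rw [← h.ncard_image]
  refine (Set.ncard_le_card _).trans_eq ?_
  simp

theorem redundancy_lower_bound_general_general
    (n ℓ δ : ℕ) (hδ : 0 < δ) (hℓ : 2 * δ < ℓ)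
    (C : Set (Fin n → Bool)) (hC : Detects n ℓ δ C) :
    C.ncard ≤ 2 ^ (n - 2 * δ * (n / ℓ - 1)) := by
  set W := boundaryWindows ℓ δ (n / ℓ)
  have hinj : Set.InjOn (fun x (i : ↥(range n \ W)) => bitAt n x i) C := by
    refine fun x hx x' hx' h =>
      eq_of_eqOn_compl_boundaryWindows hC hx hx' hδ hℓ.le fun i hi => ?_
    by_cases hin : i < n
    · exact congrFun h ⟨i, mem_sdiff.2 ⟨mem_range.2 hin, hi⟩⟩
    · simp [bitAt, hin]
  calc C.ncard ≤ 2 ^ #(range n \ W) := ncard_le_two_pow_of_injOn_bitAt _ hinj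
    _ = 2 ^ (n - 2 * δ * (n / ℓ - 1)) := by
      rw [card_sdiff_of_subset (boundaryWindows_subset_range hℓ.le), card_range,
        card_boundaryWindows hℓ.le]

/-- Any code detecting up to d deletions per block (b >= 2 blocks)
satisfies |C| <= 2^(n - 2d(b-1)). -/
theorem redundancy_lower_bound_general
    (n ℓ δ : ℕ) (hδ : 0 < δ) (hℓ : 2 * δ < ℓ) (hℓn : ℓ ≤ n / 2) (hdvd : ℓ ∣ n)
    (hb : 2 ≤ n / ℓ)
    (C : Set (Fin n → Bool)) (hC : Detects n ℓ δ C) :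
    C.ncard ≤ 2 ^ (n - 2 * δ * (n / ℓ - 1)) :=
  redundancy_lower_bound_general_general n ℓ δ hδ hℓ C hC
end

section
/- Let n, ℓ, δ be positive integers with 2δ < ℓ ≤ n/2, ℓ ∣ n and b = n/ℓ ≥ 2, and let C ⊆ 𝔽₂ⁿ be a code that detects up to δ deletions per block. Then for every codeword x ∈ C, every j ∈ {1,…,b−1}, every i₁ ∈ {ℓ−δ+1,…,ℓ} and every i₂ ∈ {1,…,δ}, the bit of block j at position i₁ differs from the bit of block j+1 at position i₂; in global coordinates, x_{(j−1)ℓ+i₁} ≠ x_{jℓ+i₂}. -/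
lemma blockList_length (n ℓ : ℕ) (x : Fin n → Bool) (j : ℕ) :
    (blockList n ℓ x j).length = ℓ := by simp [blockList]

lemma blockList_getElem (n ℓ : ℕ) (x : Fin n → Bool) (j i : ℕ) (h : i < ℓ) :
    (blockList n ℓ x j)[i]'(by rw [blockList_length]; exact h) =
      bitAt n x ((j - 1) * ℓ + i) := by
  simp [blockList]

lemma take_drop_shift {L M : List Bool} {a c : ℕ} (ha : a < L.length) (hc : c < M.length)
    (h : L[a] = M[c]) :
    L.take (a+1) ++ M.drop (c+1) = L.take a ++ M.drop c := by
  rw [List.take_succ, List.getElem?_eq_getElem ha, List.drop_eq_getElem_cons hc, h]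
  simp

/-- In any code detecting up to d deletions per block, for every
codeword x, every boundary j, every i1 in [l-d+1, l] and i2 in [1, d],
the bit of block j at position i1 differs from the bit of block j+1 at position i2. -/
theorem boundary_bits_differ
    (n ℓ δ : ℕ) (hδ : 0 < δ) (hℓ : 2 * δ < ℓ) (hℓn : ℓ ≤ n / 2) (hdvd : ℓ ∣ n)
    (hb : 2 ≤ n / ℓ)
    (C : Set (Fin n → Bool)) (hC : Detects n ℓ δ C)
    (x : Fin n → Bool) (hx : x ∈ C) :
    ∀ j ∈ Finset.Icc 1 (n / ℓ - 1), ∀ i₁ ∈ Finset.Icc (ℓ - δ + 1) ℓ,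
      ∀ i₂ ∈ Finset.Icc 1 δ,
        bitAt n x ((j - 1) * ℓ + i₁ - 1) ≠ bitAt n x (j * ℓ + i₂ - 1) := by
  classical
  intro j hj i₁ hi₁ i₂ hi₂ hcon
  simp only [Finset.mem_Icc] at hj hi₁ hi₂
  obtain ⟨p, rfl⟩ : ∃ p, j = p + 1 := ⟨j - 1, by omega⟩
  obtain ⟨a, rfl⟩ : ∃ a, i₁ = a + 1 := ⟨i₁ - 1, by omega⟩
  obtain ⟨c, rfl⟩ : ∃ c, i₂ = c + 1 := ⟨i₂ - 1, by omega⟩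
  set b := n / ℓ with hbdef
  have ha : a < ℓ := by omega
  have hcl : c < ℓ := by omega
  have hcon' : bitAt n x (p * ℓ + a) = bitAt n x ((p + 1) * ℓ + c) := by
    have e1 : (p + 1 - 1) * ℓ + (a + 1) - 1 = p * ℓ + a := by
      simp [Nat.add_sub_cancel]
    have e2 : (p + 1) * ℓ + (c + 1) - 1 = (p + 1) * ℓ + c := by
      simp [Nat.add_sub_cancel]
    rw [e1, e2] at hcon
    exact hcon
  have hgetEq : (blockList n ℓ x (p+1))[a]'(by rw [blockList_length]; exact ha)
      = (blockList n ℓ x (p+2))[c]'(by rw [blockList_length]; exact hcl) := by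
    rw [blockList_getElem n ℓ x (p+1) a ha, blockList_getElem n ℓ x (p+2) c hcl]
    have e1 : (p + 1 - 1) = p := by omega
    have e2 : (p + 2 - 1) = p + 1 := by omega
    rw [e1, e2]
    exact hcon'
  obtain ⟨q, hq⟩ : ∃ q, b = p + 2 + q := ⟨b - (p + 2), by omega⟩
  set ysA : ℕ → List Bool := fun m =>
    if m = p + 1 then (blockList n ℓ x (p+1)).take (a+1)
    else if m = p + 2 then (blockList n ℓ x (p+2)).drop (c+1)
    else blockList n ℓ x m with hysA
  set ysB : ℕ → List Bool := fun m =>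
    if m = p + 1 then (blockList n ℓ x (p+1)).take a
    else if m = p + 2 then (blockList n ℓ x (p+2)).drop c
    else blockList n ℓ x m with hysB
  set dA : ℕ → ℕ := fun m =>
    if m = p + 1 then ℓ - (a + 1) else if m = p + 2 then c + 1 else 0 with hdA
  set dB : ℕ → ℕ := fun m =>
    if m = p + 1 then ℓ - a else if m = p + 2 then c else 0 with hdB
  have eA1 : ysA (p+1) = (blockList n ℓ x (p+1)).take (a+1) := by
    simp [hysA]
  have eA2 : ysA (p+2) = (blockList n ℓ x (p+2)).drop (c+1) := by
    simp [hysA]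
  have eA3 : ∀ m, m ≠ p+1 → m ≠ p+2 → ysA m = blockList n ℓ x m := by
    intro m h1 h2; simp only [hysA]; rw [if_neg h1, if_neg h2]
  have eB1 : ysB (p+1) = (blockList n ℓ x (p+1)).take a := by
    simp [hysB]
  have eB2 : ysB (p+2) = (blockList n ℓ x (p+2)).drop c := by
    simp [hysB]
  have eB3 : ∀ m, m ≠ p+1 → m ≠ p+2 → ysB m = blockList n ℓ x m := by
    intro m h1 h2; simp only [hysB]; rw [if_neg h1, if_neg h2]
  have edA1 : dA (p+1) = ℓ - (a + 1) := by
    simp [hdA]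
  have edA2 : dA (p+2) = c + 1 := by
    simp [hdA]
  have edA3 : ∀ m, m ≠ p+1 → m ≠ p+2 → dA m = 0 := by
    intro m h1 h2; simp only [hdA]; rw [if_neg h1, if_neg h2]
  have edB1 : dB (p+1) = ℓ - a := by
    simp [hdB]
  have edB2 : dB (p+2) = c := by
    simp [hdB]
  have edB3 : ∀ m, m ≠ p+1 → m ≠ p+2 → dB m = 0 := by
    intro m h1 h2; simp only [hdB]; rw [if_neg h1, if_neg h2]
  set y : List Bool := ((List.range b).map (fun k => ysA (k + 1))).flatten with hy
  have hrange : List.range b = List.range p ++ [p, p+1] ++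
      (List.range q).map (fun k => p + 2 + k) := by
    rw [hq, List.range_add, List.range_add]
    have h2 : List.range 2 = [0, 1] := by decide
    simp [h2, List.append_assoc]
  have key : ∀ ys : ℕ → List Bool,
      ((List.range b).map (fun k => ys (k + 1))).flatten =
        ((List.range p).map (fun k => ys (k + 1))).flatten ++
          ((ys (p+1) ++ ys (p+2)) ++
            ((List.range q).map (fun k => ys (p + 2 + k + 1))).flatten) := by
    intro ys
    rw [hrange]
    simp [List.map_append, List.map_map, Function.comp_def, List.append_assoc]
  have hA : IsDelOutput n ℓ δ x dA y := by
    refine ⟨ysA, ?_, rfl⟩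
    intro m _
    by_cases h1 : m = p + 1
    · subst h1
      rw [eA1, edA1]
      exact ⟨List.take_sublist _ _, by omega,
        by rw [List.length_take, blockList_length]; omega⟩
    · by_cases h2 : m = p + 2
      · subst h2
        rw [eA2, edA2]
        exact ⟨List.drop_sublist _ _, by omega,
          by rw [List.length_drop, blockList_length]⟩
      · rw [eA3 m h1 h2, edA3 m h1 h2]
        exact ⟨List.Sublist.refl _, by omega, by rw [blockList_length]; omega⟩
  have hmid : (ysA (p+1) ++ ysA (p+2)) = (ysB (p+1) ++ ysB (p+2)) := by
    rw [eA1, eA2, eB1, eB2]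
    exact take_drop_shift (by rw [blockList_length]; exact ha)
      (by rw [blockList_length]; exact hcl) hgetEq
  have hyB : y = ((List.range b).map (fun k => ysB (k + 1))).flatten := by
    rw [hy, key ysA, key ysB, hmid]
    congr 1
    · congr 1
      apply List.map_congr_left
      intro k hk
      simp only [List.mem_range] at hk
      rw [eA3 (k+1) (by omega) (by omega), eB3 (k+1) (by omega) (by omega)]
    · congr 2
      apply List.map_congr_left
      intro k _
      rw [eA3 (p+2+k+1) (by omega) (by omega), eB3 (p+2+k+1) (by omega) (by omega)]
  have hB : IsDelOutput n ℓ δ x dB y := by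
    refine ⟨ysB, ?_, hyB⟩
    intro m _
    by_cases h1 : m = p + 1
    · subst h1
      rw [eB1, edB1]
      exact ⟨List.take_sublist _ _, by omega,
        by rw [List.length_take, blockList_length]; omega⟩
    · by_cases h2 : m = p + 2
      · subst h2
        rw [eB2, edB2]
        exact ⟨List.drop_sublist _ _, by omega,
          by rw [List.length_drop, blockList_length]⟩
      · rw [eB3 m h1 h2, edB3 m h1 h2]
        exact ⟨List.Sublist.refl _, by omega, by rw [blockList_length]; omega⟩
  have hda := hC x hx x hx dA dB y hA hB (p + 1)
    (by simp only [Finset.mem_Icc]; omega)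
  rw [edA1, edB1] at hda
  omega
end

section
/- Let n, ℓ, δ be positive integers with 2δ < ℓ ≤ n/2, ℓ ∣ n and b = n/ℓ ≥ 2, and let C ⊆ 𝔽₂ⁿ be a code that detects up to δ deletions per block. Then for every j ∈ {1,…,b−1}, C cannot contain two codewords x and x′ that agree at all coordinates outside the interval [jℓ−δ+1, jℓ+δ] and such that x_{[jℓ−δ+1, jℓ]} = 1^δ, x_{[jℓ+1, jℓ+δ]} = 0^δ, while x′_{[jℓ−δ+1, jℓ]} = 0^δ, x′_{[jℓ+1, jℓ+δ]} = 1^δ. -/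
lemma mapRangeAdd {β : Type*} (g : ℕ → β) (a k : ℕ) :
    (List.range (a + k)).map g
      = (List.range a).map g ++ (List.range k).map (fun i => g (a + i)) := by
  rw [List.range_add, List.map_append, List.map_map]
  rfl

lemma flattenBlocks (n ℓ : ℕ) (x : Fin n → Bool) (s k : ℕ) :
    ((List.range k).map (fun m => blockList n ℓ x (s + m + 1))).flatten
      = (List.range (k * ℓ)).map (fun i => bitAt n x (s * ℓ + i)) := by
  induction k with
  | zero => simp
  | succ k ih =>
    rw [List.range_succ, List.map_append, List.flatten_append, ih]
    have h1 : (k + 1) * ℓ = k * ℓ + ℓ := by ring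
    rw [h1, mapRangeAdd]
    congr 1
    simp [blockList]
    intro i _
    congr 1
    ring

lemma flattenSplit {β : Type*} (g : ℕ → List β) (b j : ℕ) (hj1 : 1 ≤ j) (hjb : j ≤ b) :
    ((List.range b).map (fun m => g (m + 1))).flatten
      = ((List.range (j - 1)).map (fun m => g (m + 1))).flatten ++ g j
        ++ ((List.range (b - j)).map (fun m => g (j + m + 1))).flatten := by
  have hb : b = (j - 1) + 1 + (b - j) := by omega
  have hj' : j - 1 + 1 = j := by omega
  calc ((List.range b).map (fun m => g (m + 1))).flatten
      = ((List.range ((j - 1) + 1 + (b - j))).map (fun m => g (m + 1))).flatten := by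
        rw [← hb]
    _ = ((List.range (j - 1)).map (fun m => g (m + 1))).flatten
        ++ ((List.range 1).map (fun i => g ((j - 1) + i + 1))).flatten
        ++ ((List.range (b - j)).map (fun i => g ((j - 1) + 1 + i + 1))).flatten := by
        rw [mapRangeAdd, mapRangeAdd, List.flatten_append, List.flatten_append]
    _ = _ := by
        congr 1
        · congr 1
          show (List.map (fun i => g (j - 1 + i + 1)) [0]).flatten = g j
          simp only [List.map_cons, List.map_nil, List.flatten_cons, List.flatten_nil,
            List.append_nil, Nat.add_zero, hj']
        · apply congrArg
          apply List.map_congr_left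
          intro m _
          congr 1
          omega

/-- A code detecting up to d deletions per block cannot contain two
codewords agreeing outside the interval [jl-d+1, jl+d] where one has the marker
pattern (1^d, 0^d) and the other the pattern (0^d, 1^d) at boundary j. -/
theorem no_opposite_markers
    (n ℓ δ : ℕ) (hδ : 0 < δ) (hℓ : 2 * δ < ℓ) (hℓn : ℓ ≤ n / 2) (hdvd : ℓ ∣ n)
    (hb : 2 ≤ n / ℓ)
    (C : Set (Fin n → Bool)) (hC : Detects n ℓ δ C)
    (j : ℕ) (hj : j ∈ Finset.Icc 1 (n / ℓ - 1)) :
    ¬ ∃ x ∈ C, ∃ x' ∈ C,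
      (∀ i ∈ Finset.Icc 1 n, (i < j * ℓ - δ + 1 ∨ j * ℓ + δ < i) →
        bitAt n x (i - 1) = bitAt n x' (i - 1)) ∧
      (∀ i ∈ Finset.Icc (j * ℓ - δ + 1) (j * ℓ), bitAt n x (i - 1) = true) ∧
      (∀ i ∈ Finset.Icc (j * ℓ + 1) (j * ℓ + δ), bitAt n x (i - 1) = false) ∧
      (∀ i ∈ Finset.Icc (j * ℓ - δ + 1) (j * ℓ), bitAt n x' (i - 1) = false) ∧
      (∀ i ∈ Finset.Icc (j * ℓ + 1) (j * ℓ + δ), bitAt n x' (i - 1) = true) := by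
  rintro ⟨x, hx, x', hx', hA, -, h0, h0', -⟩
  rw [Finset.mem_Icc] at hj
  obtain ⟨hj1, hj2⟩ := hj
  have hbl : (n / ℓ) * ℓ = n := Nat.div_mul_cancel hdvd
  have hδℓ : δ < ℓ := by omega
  have hℓj : ℓ ≤ j * ℓ := Nat.le_mul_of_pos_left ℓ (by omega)
  have hjb : j + 1 ≤ n / ℓ := by omega
  have hj1l : (j + 1) * ℓ ≤ (n / ℓ) * ℓ := Nat.mul_le_mul_right ℓ hjb
  have hj1e : (j + 1) * ℓ = j * ℓ + ℓ := by ring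
  have hjln : j * ℓ + ℓ ≤ n := by omega
  have e1 : (j - 1) * ℓ = j * ℓ - 1 * ℓ := Nat.sub_mul j 1 ℓ
  have e1' : 1 * ℓ = ℓ := one_mul ℓ
  have e2 : (n / ℓ - j) * ℓ = (n / ℓ) * ℓ - j * ℓ := Nat.sub_mul _ j ℓ
  have e3 : (n / ℓ - (j + 1)) * ℓ = (n / ℓ) * ℓ - (j + 1) * ℓ := Nat.sub_mul _ (j + 1) ℓ
  -- 0-indexed facts
  have hAg : ∀ i, i < n → (i < j * ℓ - δ ∨ j * ℓ + δ ≤ i) → bitAt n x i = bitAt n x' i := by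
    intro i hi hc
    have := hA (i + 1) (Finset.mem_Icc.mpr ⟨by omega, by omega⟩) (by omega)
    simpa using this
  have hz : ∀ i, i < δ → bitAt n x (j * ℓ + i) = false := by
    intro i hi
    have := h0 (j * ℓ + i + 1) (Finset.mem_Icc.mpr ⟨by omega, by omega⟩)
    simpa using this
  have hz' : ∀ i, i < δ → bitAt n x' (j * ℓ - δ + i) = false := by
    intro i hi
    have := h0' (j * ℓ - δ + i + 1) (Finset.mem_Icc.mpr ⟨by omega, by omega⟩)
    simpa using this
  set A : List Bool := (List.range (j * ℓ - δ)).map (bitAt n x) with hAdef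
  set R : List Bool := List.replicate δ false with hRdef
  set B : List Bool := (List.range (n - (j * ℓ + δ))).map (fun i => bitAt n x (j * ℓ + δ + i)) with hBdef
  set Y : List Bool := A ++ R ++ B with hYdef
  set ys : ℕ → List Bool :=
    fun m => if m = j then (blockList n ℓ x j).take (ℓ - δ) else blockList n ℓ x m with hysdef
  set ys' : ℕ → List Bool :=
    fun m => if m = j + 1 then (blockList n ℓ x' (j + 1)).drop δ else blockList n ℓ x' m with hys'def
  have hysj : ys j = (blockList n ℓ x j).take (ℓ - δ) := by simp [hysdef]
  have hysne : ∀ m, m ≠ j → ys m = blockList n ℓ x m := by intro m h; simp [hysdef, h]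
  have hys'j : ys' (j + 1) = (blockList n ℓ x' (j + 1)).drop δ := by simp [hys'def]
  have hys'ne : ∀ m, m ≠ j + 1 → ys' m = blockList n ℓ x' m := by
    intro m h; simp [hys'def, h]
  have hlenb : ∀ (z : Fin n → Bool) m, (blockList n ℓ z m).length = ℓ := by
    intro z m; simp [blockList]
  have hbe : ∀ (z : Fin n → Bool) (m : ℕ),
      blockList n ℓ z (m + 1) = (List.range ℓ).map (fun i => bitAt n z (m * ℓ + i)) := by
    intro z m; simp [blockList]
  -- deletion output from x : delete last δ bits of block j
  have hdel : IsDelOutput n ℓ δ x (fun m => if m = j then δ else 0) Y := by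
    refine ⟨ys, ?_, ?_⟩
    · intro m hm
      by_cases h : m = j
      · subst h
        refine ⟨?_, by dsimp only; split <;> omega, ?_⟩
        · rw [hysj]; exact List.take_sublist _ _
        · rw [hysj, List.length_take, hlenb]; dsimp only; rw [if_pos rfl]; omega
      · refine ⟨?_, by dsimp only; split <;> omega, ?_⟩
        · rw [hysne m h]
        · rw [hysne m h, hlenb]; dsimp only; rw [if_neg h]; omega
    · rw [flattenSplit ys (n / ℓ) j hj1 (by omega)]
      have p1 : (List.range (j - 1)).map (fun m => ys (m + 1))
          = (List.range (j - 1)).map (fun m => blockList n ℓ x (0 + m + 1)) := by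
        apply List.map_congr_left
        intro m hm
        have hm' := List.mem_range.mp hm
        rw [hysne (m + 1) (by omega)]
        congr 1
        omega
      have p3 : (List.range (n / ℓ - j)).map (fun m => ys (j + m + 1))
          = (List.range (n / ℓ - j)).map (fun m => blockList n ℓ x (j + m + 1)) := by
        apply List.map_congr_left
        intro m hm
        exact hysne (j + m + 1) (by omega)
      rw [p1, p3, flattenBlocks n ℓ x 0 (j - 1), flattenBlocks n ℓ x j (n / ℓ - j)]
      have pj : ys j = (List.range (ℓ - δ)).map (fun i => bitAt n x ((j - 1) * ℓ + i)) := by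
        rw [hysj, blockList, ← List.map_take, List.take_range,
          show (ℓ - δ) ⊓ ℓ = ℓ - δ from by omega]
      rw [pj]
      have q1 : (List.range ((j - 1) * ℓ)).map (fun i => bitAt n x (0 * ℓ + i))
          = (List.range ((j - 1) * ℓ)).map (bitAt n x) := by
        apply List.map_congr_left; intro i _; congr 1; omega
      rw [q1]
      have q2 : (List.range ((j - 1) * ℓ)).map (bitAt n x)
            ++ (List.range (ℓ - δ)).map (fun i => bitAt n x ((j - 1) * ℓ + i)) = A := by
        rw [hAdef, show j * ℓ - δ = (j - 1) * ℓ + (ℓ - δ) from by omega, mapRangeAdd]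
      have q3 : (List.range ((n / ℓ - j) * ℓ)).map (fun i => bitAt n x (j * ℓ + i))
          = R ++ B := by
        rw [show (n / ℓ - j) * ℓ = δ + (n - (j * ℓ + δ)) from by omega, mapRangeAdd]
        congr 1
        · calc (List.range δ).map (fun i => bitAt n x (j * ℓ + i))
              = (List.range δ).map (fun _ => false) :=
                List.map_congr_left (fun i hi => hz i (List.mem_range.mp hi))
            _ = R := by rw [hRdef, List.map_const', List.length_range]
        · rw [hBdef]
          apply List.map_congr_left
          intro i _
          congr 1
          omega
      rw [q3, q2, hYdef, List.append_assoc]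
  -- deletion output from x' : delete first δ bits of block j+1
  have hdel' : IsDelOutput n ℓ δ x' (fun m => if m = j + 1 then δ else 0) Y := by
    refine ⟨ys', ?_, ?_⟩
    · intro m hm
      by_cases h : m = j + 1
      · subst h
        refine ⟨?_, by dsimp only; split <;> omega, ?_⟩
        · rw [hys'j]; exact List.drop_sublist _ _
        · rw [hys'j, List.length_drop, hlenb]; dsimp only; rw [if_pos rfl]
      · refine ⟨?_, by dsimp only; split <;> omega, ?_⟩
        · rw [hys'ne m h]
        · rw [hys'ne m h, hlenb]; dsimp only; rw [if_neg h]; omega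
    · rw [flattenSplit ys' (n / ℓ) (j + 1) (by omega) hjb]
      have p1 : (List.range (j + 1 - 1)).map (fun m => ys' (m + 1))
          = (List.range j).map (fun m => blockList n ℓ x' (0 + m + 1)) := by
        rw [Nat.add_sub_cancel]
        apply List.map_congr_left
        intro m hm
        have hm' := List.mem_range.mp hm
        rw [hys'ne (m + 1) (by omega)]
        congr 1
        omega
      have p3 : (List.range (n / ℓ - (j + 1))).map (fun m => ys' (j + 1 + m + 1))
          = (List.range (n / ℓ - (j + 1))).map (fun m => blockList n ℓ x' (j + 1 + m + 1)) := by
        apply List.map_congr_left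
        intro m hm
        exact hys'ne (j + 1 + m + 1) (by omega)
      rw [p1, p3, flattenBlocks n ℓ x' 0 j, flattenBlocks n ℓ x' (j + 1) (n / ℓ - (j + 1))]
      -- first piece: blocks 1..j of x'
      have q1 : (List.range (j * ℓ)).map (fun i => bitAt n x' (0 * ℓ + i)) = A ++ R := by
        rw [show j * ℓ = (j * ℓ - δ) + δ from by omega, mapRangeAdd]
        congr 1
        · rw [hAdef]
          apply List.map_congr_left
          intro i hi
          have hi' := List.mem_range.mp hi
          rw [show 0 * ℓ + i = i from by omega]
          exact (hAg i (by omega) (Or.inl hi')).symm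
        · calc (List.range δ).map (fun i => bitAt n x' (0 * ℓ + (j * ℓ - δ + i)))
              = (List.range δ).map (fun _ => false) := by
                apply List.map_congr_left
                intro i hi
                rw [show 0 * ℓ + (j * ℓ - δ + i) = j * ℓ - δ + i from by omega]
                exact hz' i (List.mem_range.mp hi)
            _ = R := by rw [hRdef, List.map_const', List.length_range]
      -- middle: dropped block j+1 of x'
      have pj : ys' (j + 1) = (List.range (ℓ - δ)).map (fun i => bitAt n x (j * ℓ + δ + i)) := by
        rw [hys'j, hbe x' j]
        calc ((List.range ℓ).map (fun i => bitAt n x' (j * ℓ + i))).drop δ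
            = ((List.range δ).map (fun i => bitAt n x' (j * ℓ + i))
                ++ (List.range (ℓ - δ)).map (fun i => bitAt n x' (j * ℓ + (δ + i)))).drop δ := by
              rw [← mapRangeAdd, show δ + (ℓ - δ) = ℓ from by omega]
          _ = (List.range (ℓ - δ)).map (fun i => bitAt n x' (j * ℓ + (δ + i))) := by
              apply List.drop_left'
              simp
          _ = (List.range (ℓ - δ)).map (fun i => bitAt n x (j * ℓ + δ + i)) := by
              apply List.map_congr_left
              intro i hi
              have hi' := List.mem_range.mp hi
              rw [show j * ℓ + (δ + i) = j * ℓ + δ + i from by omega]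
              exact (hAg (j * ℓ + δ + i) (by omega) (Or.inr (by omega))).symm
      rw [pj, q1]
      -- last piece: blocks j+2..b of x'
      have q3 : (List.range ((n / ℓ - (j + 1)) * ℓ)).map (fun i => bitAt n x' ((j + 1) * ℓ + i))
          = (List.range ((n / ℓ - (j + 1)) * ℓ)).map
              (fun i => bitAt n x (j * ℓ + δ + ((ℓ - δ) + i))) := by
        apply List.map_congr_left
        intro i hi
        have hi' := List.mem_range.mp hi
        rw [show (j + 1) * ℓ + i = j * ℓ + δ + ((ℓ - δ) + i) from by omega]
        exact (hAg (j * ℓ + δ + ((ℓ - δ) + i)) (by omega) (Or.inr (by omega))).symm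
      rw [q3]
      have q4 : (List.range (ℓ - δ)).map (fun i => bitAt n x (j * ℓ + δ + i))
            ++ (List.range ((n / ℓ - (j + 1)) * ℓ)).map
              (fun i => bitAt n x (j * ℓ + δ + ((ℓ - δ) + i)))
          = B := by
        rw [← mapRangeAdd, hBdef, show (ℓ - δ) + (n / ℓ - (j + 1)) * ℓ = n - (j * ℓ + δ) from by omega]
      rw [List.append_assoc, q4, hYdef]
  -- contradiction via Detects
  have hfin := hC x hx x' hx' _ _ Y hdel hdel' j (Finset.mem_Icc.mpr ⟨hj1, by omega⟩)
  have : δ = 0 := by simpa using hfin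
  omega
end

section
/- Let n, ℓ, δ be positive integers with 2δ < ℓ ≤ n/2 and ℓ ∣ n. The marker code D_δ(ℓ,n) detects up to δ deletions per block: for all x, x′ ∈ D_δ(ℓ,n), if a δ-per-block deletion output of x with deletion pattern d equals, as a string, a δ-per-block deletion output of x′ with deletion pattern d′, then d = d′. -/
/-- The marker code D_delta(l,n): the last d bits of blocks 1..b-1 are all 1
and the first d+1 bits of blocks 2..b are all 0. -/
def markerCode (n ℓ δ : ℕ) : Set (Fin n → Bool) :=
  {x | (∀ j ∈ Finset.Icc 1 (n / ℓ - 1), ∀ i ∈ Finset.Icc (ℓ - δ + 1) ℓ,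
          bitAt n x ((j - 1) * ℓ + i - 1) = true) ∧
       (∀ j ∈ Finset.Icc 2 (n / ℓ), ∀ i ∈ Finset.Icc 1 (δ + 1),
          bitAt n x ((j - 1) * ℓ + i - 1) = false)}

theorem List.Sublist.exists_getElem_eq {α : Type*} {s t : List α} (h : s.Sublist t) {k : ℕ}
    (hk : k < s.length) :
    ∃ (i : ℕ) (hi : i < t.length), k ≤ i ∧ i + s.length ≤ k + t.length ∧ s[k] = t[i] := by
  induction h generalizing k with
  | slnil => simp at hk
  | cons a h ih =>
    obtain ⟨i, hi, hki, hit, heq⟩ := ih hk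
    exact ⟨i + 1, by simpa using hi, by omega, by simp; omega, by simpa using heq⟩
  | cons_cons a h ih =>
    cases k with
    | zero => exact ⟨0, by simp, le_rfl, by simpa using h.length_le, rfl⟩
    | succ k =>
      obtain ⟨i, hi, hki, hit, heq⟩ := ih (by simpa using hk)
      exact ⟨i + 1, by simpa using hi, by omega, by simp; omega, by simpa using heq⟩

theorem List.length_flatten_map_range {α : Type*} (f : ℕ → List α) (b : ℕ) :
    ((List.range b).map f).flatten.length = ∑ i ∈ Finset.range b, (f i).length := by
  induction b with
  | zero => simp
  | succ b ih => simp [List.range_succ, Finset.sum_range_succ, ih]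

theorem List.getD_flatten_map_range {α : Type*} (f : ℕ → List α) {b j k : ℕ} (hj : j < b)
    (hk : k < (f j).length) (a : α) :
    ((List.range b).map f).flatten.getD (∑ i ∈ Finset.range j, (f i).length + k) a
      = (f j).getD k a := by
  induction b with
  | zero => omega
  | succ b ih =>
    simp only [List.range_succ, List.map_append, List.flatten_append, List.map_singleton,
      List.flatten_singleton]
    rcases Nat.lt_succ_iff_lt_or_eq.mp hj with hjb | rfl
    · have hprefix : ∑ i ∈ Finset.range (j + 1), (f i).length
          ≤ ∑ i ∈ Finset.range b, (f i).length :=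
        Finset.sum_le_sum_of_subset (Finset.range_subset_range.mpr hjb)
      rw [Finset.sum_range_succ] at hprefix
      rw [List.getD_append _ _ _ _ (by rw [List.length_flatten_map_range]; omega), ih hjb]
    · rw [List.getD_append_right _ _ _ _ (by rw [List.length_flatten_map_range]; omega),
        List.length_flatten_map_range, Nat.add_sub_cancel_left]

theorem startIdx_succ_eq_sum_range (ℓ : ℕ) (d : ℕ → ℕ) (j : ℕ) :
    startIdx ℓ d (j + 1) = ∑ i ∈ Finset.range j, (ℓ - d (i + 1)) := by
  rw [startIdx, Nat.add_sub_cancel, ← Finset.Ico_add_one_right_eq_Icc,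
    Finset.sum_Ico_eq_sum_range]
  simp [add_comm]

theorem startIdx_succ (ℓ : ℕ) (d : ℕ → ℕ) {j : ℕ} (hj : 1 ≤ j) :
    startIdx ℓ d (j + 1) = startIdx ℓ d j + (ℓ - d j) := by
  obtain ⟨j, rfl⟩ := Nat.exists_eq_add_of_le' hj
  rw [startIdx_succ_eq_sum_range, startIdx_succ_eq_sum_range, Finset.sum_range_succ]

theorem startIdx_congr {ℓ : ℕ} {d d' : ℕ → ℕ} {j : ℕ} (h : ∀ m, 1 ≤ m → m < j → d m = d' m) :
    startIdx ℓ d j = startIdx ℓ d' j :=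
  Finset.sum_congr rfl fun m hm => by
    rw [Finset.mem_Icc] at hm
    rw [h m hm.1 (by omega)]

theorem getD_startIdx_add_flatten {α : Type*} {ys : ℕ → List α} {ℓ b : ℕ} {d : ℕ → ℕ}
    (hlen : ∀ j ∈ Finset.Icc 1 b, (ys j).length = ℓ - d j) {j k : ℕ}
    (hj : j ∈ Finset.Icc 1 b) (hk : k < ℓ - d j) (a : α) :
    ((List.range b).map fun i => ys (i + 1)).flatten.getD (startIdx ℓ d j + k) a
      = (ys j).getD k a := by
  obtain ⟨hj1, hjb⟩ := Finset.mem_Icc.mp hj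
  obtain ⟨j, rfl⟩ := Nat.exists_eq_add_of_le' hj1
  have hprefix : startIdx ℓ d (j + 1) = ∑ i ∈ Finset.range j, (ys (i + 1)).length := by
    rw [startIdx_succ_eq_sum_range]
    exact Finset.sum_congr rfl fun i hi =>
      (hlen (i + 1) (Finset.mem_Icc.mpr ⟨by omega, by simp at hi; omega⟩)).symm
  rw [hprefix]
  exact List.getD_flatten_map_range (fun i => ys (i + 1)) (by omega) (by rw [hlen _ hj]; exact hk) a

theorem getElem_blockList {n ℓ : ℕ} (x : Fin n → Bool) (j : ℕ) {i : ℕ}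
    (hi : i < (blockList n ℓ x j).length) :
    (blockList n ℓ x j)[i] = bitAt n x ((j - 1) * ℓ + i) := by
  simp [blockList]

section markerCode

variable {n ℓ δ : ℕ} {x : Fin n → Bool}

theorem blockList_getElem_eq_true_of_mem_markerCode (hx : x ∈ markerCode n ℓ δ) {j : ℕ}
    (hj : j ∈ Finset.Icc 1 (n / ℓ - 1)) {i : ℕ} (hi : i < (blockList n ℓ x j).length)
    (hδi : ℓ - δ ≤ i) : (blockList n ℓ x j)[i] = true := by
  have hiℓ : i < ℓ := by simpa [blockList] using hi
  rw [getElem_blockList]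
  simpa [show (j - 1) * ℓ + (i + 1) - 1 = (j - 1) * ℓ + i by omega] using
    hx.1 j hj (i + 1) (Finset.mem_Icc.mpr ⟨by omega, hiℓ⟩)

theorem blockList_getElem_eq_false_of_mem_markerCode (hx : x ∈ markerCode n ℓ δ) {j : ℕ}
    (hj : j ∈ Finset.Icc 2 (n / ℓ)) {i : ℕ} (hi : i < (blockList n ℓ x j).length)
    (hiδ : i ≤ δ) : (blockList n ℓ x j)[i] = false := by
  rw [getElem_blockList]
  simpa [show (j - 1) * ℓ + (i + 1) - 1 = (j - 1) * ℓ + i by omega] using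
    hx.2 j hj (i + 1) (Finset.mem_Icc.mpr ⟨by omega, by omega⟩)

end markerCode

namespace IsDelOutput

variable {n ℓ δ : ℕ} {x : Fin n → Bool} {d : ℕ → ℕ} {y : List Bool}

theorem le (h : IsDelOutput n ℓ δ x d y) {j : ℕ} (hj : j ∈ Finset.Icc 1 (n / ℓ)) : d j ≤ δ := by
  obtain ⟨ys, hys, -⟩ := h
  exact (hys j hj).2.1

theorem length_eq (h : IsDelOutput n ℓ δ x d y) : y.length = startIdx ℓ d (n / ℓ + 1) := by
  obtain ⟨ys, hys, rfl⟩ := h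
  rw [List.length_flatten_map_range, startIdx_succ_eq_sum_range]
  exact Finset.sum_congr rfl fun i hi =>
    (hys (i + 1) (Finset.mem_Icc.mpr ⟨by omega, by simp at hi; omega⟩)).2.2

theorem getD_eq_true (hx : x ∈ markerCode n ℓ δ) (h : IsDelOutput n ℓ δ x d y) {j k : ℕ}
    (hj : j ∈ Finset.Icc 1 (n / ℓ - 1)) (hδk : ℓ - δ ≤ k) (hkd : k < ℓ - d j) :
    y.getD (startIdx ℓ d j + k) false = true := by
  obtain ⟨ys, hys, rfl⟩ := h
  have hj' : j ∈ Finset.Icc 1 (n / ℓ) := by simp at hj ⊢; omega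
  obtain ⟨hsub, -, hlen⟩ := hys j hj'
  rw [getD_startIdx_add_flatten (fun j hj => (hys j hj).2.2) hj' hkd,
    List.getD_eq_getElem _ _ (hlen ▸ hkd)]
  obtain ⟨i, hi, hki, -, heq⟩ := hsub.exists_getElem_eq (hlen ▸ hkd)
  rw [heq]
  exact blockList_getElem_eq_true_of_mem_markerCode hx hj hi (by omega)

theorem getD_startIdx_eq_false (hδℓ : δ < ℓ) (hx : x ∈ markerCode n ℓ δ)
    (h : IsDelOutput n ℓ δ x d y) {j : ℕ} (hj : j ∈ Finset.Icc 2 (n / ℓ)) :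
    y.getD (startIdx ℓ d j) false = false := by
  obtain ⟨ys, hys, rfl⟩ := h
  have hj' : j ∈ Finset.Icc 1 (n / ℓ) := by simp at hj ⊢; omega
  obtain ⟨hsub, hdj, hlen⟩ := hys j hj'
  have hpos : 0 < ℓ - d j := by omega
  rw [← Nat.add_zero (startIdx ℓ d j), getD_startIdx_add_flatten (fun j hj => (hys j hj).2.2) hj' hpos,
    List.getD_eq_getElem _ _ (hlen ▸ hpos)]
  obtain ⟨i, hi, -, hit, heq⟩ := hsub.exists_getElem_eq (hlen ▸ hpos)
  rw [heq]
  refine blockList_getElem_eq_false_of_mem_markerCode hx hj hi ?_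
  simp only [hlen, blockList, List.length_map, List.length_range] at hit
  omega

theorem le_of_startIdx_eq {x' : Fin n → Bool} {d' : ℕ → ℕ} (hδℓ : δ < ℓ)
    (hx : x ∈ markerCode n ℓ δ) (hx' : x' ∈ markerCode n ℓ δ)
    (h : IsDelOutput n ℓ δ x d y) (h' : IsDelOutput n ℓ δ x' d' y) {j : ℕ}
    (hj : j ∈ Finset.Icc 1 (n / ℓ - 1)) (hs : startIdx ℓ d j = startIdx ℓ d' j) :
    d j ≤ d' j := by
  by_contra! hlt
  obtain ⟨hj1, hjb⟩ := Finset.mem_Icc.mp hj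
  have hdj : d j ≤ δ := h.le (Finset.mem_Icc.mpr ⟨hj1, by omega⟩)
  -- block `j + 1` of `x` starts with a 0 of its marker, where `x'` is still in the 1s of block `j`
  have hzero := h.getD_startIdx_eq_false hδℓ hx (j := j + 1) (Finset.mem_Icc.mpr ⟨by omega, by omega⟩)
  rw [startIdx_succ ℓ d hj1, hs, h'.getD_eq_true hx' hj (by omega) (by omega)] at hzero
  exact Bool.noConfusion hzero

end IsDelOutput

theorem markerCode_detects_general
    (n ℓ δ : ℕ) (hℓ : 2 * δ < ℓ) :
    Detects n ℓ δ (markerCode n ℓ δ) := by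
  intro x hx x' hx' d d' y hy hy'
  have hδℓ : δ < ℓ := by omega
  suffices ∀ j, 1 ≤ j → j ≤ n / ℓ → d j = d' j from
    fun j hj => this j (Finset.mem_Icc.mp hj).1 (Finset.mem_Icc.mp hj).2
  intro j
  induction j using Nat.strong_induction_on with
  | _ j ih =>
    intro hj1 hjb
    have hs : startIdx ℓ d j = startIdx ℓ d' j :=
      startIdx_congr fun m hm1 hmj => ih m hmj hm1 (by omega)
    rcases hjb.lt_or_eq with hjb | rfl
    · have hj : j ∈ Finset.Icc 1 (n / ℓ - 1) := Finset.mem_Icc.mpr ⟨hj1, by omega⟩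
      exact le_antisymm (hy.le_of_startIdx_eq hδℓ hx hx' hy' hj hs)
        (hy'.le_of_startIdx_eq hδℓ hx' hx hy hj hs.symm)
    · have hlen := hy.length_eq.symm.trans hy'.length_eq
      rw [startIdx_succ ℓ d hj1, startIdx_succ ℓ d' hj1, hs] at hlen
      have hj : n / ℓ ∈ Finset.Icc 1 (n / ℓ) := Finset.mem_Icc.mpr ⟨hj1, le_rfl⟩
      have := hy.le hj
      have := hy'.le hj
      omega

/-- The marker code detects up to d deletions per block. -/
theorem markerCode_detects
    (n ℓ δ : ℕ) (hδ : 0 < δ) (hℓ : 2 * δ < ℓ) (hℓn : ℓ ≤ n / 2) (hdvd : ℓ ∣ n) :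
    Detects n ℓ δ (markerCode n ℓ δ) :=
  markerCode_detects_general n ℓ δ hℓ
end

section
/- Let n, ℓ, δ be positive integers with 2δ < ℓ ≤ n/2 and ℓ ∣ n, and set b = n/ℓ. The marker code D_δ(ℓ,n) is block-by-block decodable: there exist functions f₁,…,f_{b−1} : 𝔽₂^ℓ → {0,…,δ} such that for every x ∈ D_δ(ℓ,n) and every δ-per-block deletion output y of x with deletion pattern d, setting α₁ = 1 and α_{j+1} = α_j + ℓ − d_j, one has f_j(y_{α_j},…,y_{α_j+ℓ−1}) = d_j for all j = 1,…,b−1. Moreover, one may take each f_j to be the map sending w ∈ 𝔽₂^ℓ to 0 if the last δ bits of w are all 1, and to δ − β + 1 otherwise, where β is the least index in {1,…,δ} with w_{ℓ−δ+β} = 0. -/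
/-- The explicit block decoder: output 0 if the last d bits of w are all 1,
and d - beta + 1 where beta is the least index in [1,d] with w_(l-d+beta) = 0 otherwise. -/
def markerDecode (ℓ δ : ℕ) (w : Fin ℓ → Bool) : ℕ :=
  if h : ((Finset.Icc 1 δ).filter (fun β => bitAt ℓ w (ℓ - δ + β - 1) = false)).Nonempty
  then δ - ((Finset.Icc 1 δ).filter (fun β => bitAt ℓ w (ℓ - δ + β - 1) = false)).min' h + 1
  else 0

/-! In the window of `y` starting at `α_j`, the first `ℓ - d_j` bits are the surviving bits `y^j`
of block `j` and the next one is the first bit of `y^{j+1}`. A bit of `y^j` at position at least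
`ℓ - δ` sits at a position at least as large in `x^j`, so it is one of the trailing marker `1`s;
the first bit of `y^{j+1}` comes from one of the first `d_{j+1} + 1 ≤ δ + 1` bits of `x^{j+1}`,
so it is a leading marker `0`. Hence the window reads `1` at positions `ℓ - δ, …, ℓ - d_j - 1`
and (if `d_j > 0`) `0` at position `ℓ - d_j`, which is exactly what `markerDecode` inverts. -/

theorem List.Sublist.exists_le_getD_eq {α : Type*} {s t : List α} (h : s.Sublist t) (a : α)
    {i : ℕ} (hi : i < s.length) :
    ∃ m, i ≤ m ∧ m + s.length ≤ i + t.length ∧ s.getD i a = t.getD m a := by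
  induction h generalizing i with
  | slnil => simp at hi
  | cons b _ ih =>
    obtain ⟨m, him, hm, hget⟩ := ih hi
    exact ⟨m + 1, by omega, by simp; omega, by simpa using hget⟩
  | cons_cons b h ih =>
    cases i with
    | zero => exact ⟨0, le_rfl, by simp [h.length_le], by simp⟩
    | succ i =>
      obtain ⟨m, him, hm, hget⟩ := ih (by simpa using hi)
      exact ⟨m + 1, by omega, by simp; omega, by simpa using hget⟩

theorem List.getD_flatten_map_range_sum_length_add {α : Type*} (g : ℕ → List α) (a : α)
    {b j p : ℕ} (hjb : j + 1 < b) (hp : p < (g j).length + (g (j + 1)).length) :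
    ((List.range b).map g).flatten.getD (∑ m ∈ Finset.range j, (g m).length + p) a =
      (g j ++ g (j + 1)).getD p a := by
  induction j generalizing g b with
  | zero =>
    obtain ⟨b, rfl⟩ : ∃ b', b = b' + 2 := ⟨b - 2, by omega⟩
    rw [List.range_succ_eq_map, List.range_succ_eq_map]
    simp only [List.map_cons, List.map_map, List.flatten_cons, Finset.range_zero,
      Finset.sum_empty, zero_add, ← List.append_assoc]
    exact List.getD_append _ _ _ _ (by simpa using hp)
  | succ j ih =>
    obtain ⟨b, rfl⟩ : ∃ b', b = b' + 1 := ⟨b - 1, by omega⟩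
    rw [List.range_succ_eq_map, List.map_cons, List.flatten_cons, List.map_map,
      Finset.sum_range_succ', add_comm _ (g 0).length, add_assoc,
      List.getD_append_right _ _ _ _ (by omega), Nat.add_sub_cancel_left]
    exact ih (g ∘ Nat.succ) (by omega) hp

theorem startIdx_eq_sum_length {ℓ j : ℕ} {d : ℕ → ℕ} {ys : ℕ → List Bool}
    (hlen : ∀ m ∈ Finset.Icc 1 (j - 1), (ys m).length = ℓ - d m) :
    startIdx ℓ d j = ∑ m ∈ Finset.range (j - 1), (ys (m + 1)).length := by
  rw [startIdx, ← Finset.Ico_add_one_right_eq_Icc, Finset.sum_Ico_eq_sum_range,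
    Nat.add_sub_cancel]
  refine Finset.sum_congr rfl fun m hm => ?_
  rw [add_comm, hlen]
  simp only [Finset.mem_range] at hm
  exact Finset.mem_Icc.mpr ⟨by omega, by omega⟩

theorem markerDecode_le (ℓ δ : ℕ) (w : Fin ℓ → Bool) : markerDecode ℓ δ w ≤ δ := by
  unfold markerDecode
  split_ifs with h
  · have := (Finset.mem_filter.mp (Finset.min'_mem _ h)).1
    simp only [Finset.mem_Icc] at this
    omega
  · exact Nat.zero_le δ

theorem markerDecode_eq {ℓ δ k : ℕ} {w : Fin ℓ → Bool} (hkδ : k ≤ δ) (hδℓ : δ ≤ ℓ)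
    (hones : ∀ p, ℓ - δ ≤ p → p < ℓ - k → bitAt ℓ w p = true)
    (hzero : k ≠ 0 → bitAt ℓ w (ℓ - k) = false) :
    markerDecode ℓ δ w = k := by
  set F := (Finset.Icc 1 δ).filter (fun β => bitAt ℓ w (ℓ - δ + β - 1) = false)
  have hF : ∀ β ∈ F, δ - k + 1 ≤ β := by
    intro β hβ
    obtain ⟨hβδ, hβw⟩ := Finset.mem_filter.mp hβ
    rw [Finset.mem_Icc] at hβδ
    by_contra! hlt
    simp [hones (ℓ - δ + β - 1) (by omega) (by omega)] at hβw
  rcases Nat.eq_zero_or_pos k with rfl | hk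
  · have hFempty : ¬ F.Nonempty := fun ⟨β, hβ⟩ => by
      have := hF β hβ
      rw [Finset.mem_filter, Finset.mem_Icc] at hβ
      omega
    rw [markerDecode, dif_neg hFempty]
  · have hmem : δ - k + 1 ∈ F := by
      refine Finset.mem_filter.mpr ⟨Finset.mem_Icc.mpr ⟨by omega, by omega⟩, ?_⟩
      rw [show ℓ - δ + (δ - k + 1) - 1 = ℓ - k by omega]
      exact hzero hk.ne'
    have hmin : F.min' ⟨_, hmem⟩ = δ - k + 1 :=
      le_antisymm (F.min'_le _ hmem) (F.le_min' _ _ hF)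
    rw [markerDecode, dif_pos ⟨_, hmem⟩, hmin]
    omega

theorem blockList_getD (n ℓ : ℕ) (x : Fin n → Bool) (j : ℕ) {m : ℕ} (hm : m < ℓ) :
    (blockList n ℓ x j).getD m false = bitAt n x ((j - 1) * ℓ + m) := by
  simp [blockList, List.getD_eq_getElem?_getD, List.getElem?_range hm]

namespace markerCode

variable {n ℓ δ : ℕ} {x : Fin n → Bool} {j : ℕ} {ys : List Bool}

theorem getD_of_sublist_blockList_eq_true (hx : x ∈ markerCode n ℓ δ)
    (hj : j ∈ Finset.Icc 1 (n / ℓ - 1)) (hsub : ys.Sublist (blockList n ℓ x j)) {i : ℕ}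
    (hδi : ℓ - δ ≤ i) (hi : i < ys.length) :
    ys.getD i false = true := by
  obtain ⟨m, him, hm, hget⟩ := hsub.exists_le_getD_eq false hi
  simp only [blockList, List.length_map, List.length_range] at hm
  rw [hget, blockList_getD n ℓ x j (by omega)]
  have := hx.1 j hj (m + 1) (Finset.mem_Icc.mpr ⟨by omega, by omega⟩)
  rwa [← add_assoc, Nat.add_sub_cancel] at this

theorem getD_zero_of_sublist_blockList_eq_false (hx : x ∈ markerCode n ℓ δ)
    (hj : j ∈ Finset.Icc 2 (n / ℓ)) (hsub : ys.Sublist (blockList n ℓ x j))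
    (hlen : ℓ - δ ≤ ys.length) (hpos : 0 < ys.length) :
    ys.getD 0 false = false := by
  obtain ⟨m, -, hm, hget⟩ := hsub.exists_le_getD_eq false hpos
  simp only [blockList, List.length_map, List.length_range] at hm
  rw [hget, blockList_getD n ℓ x j (by omega)]
  have := hx.2 j hj (m + 1) (Finset.mem_Icc.mpr ⟨by omega, by omega⟩)
  rwa [← add_assoc, Nat.add_sub_cancel] at this

theorem markerDecode_window_startIdx (hδℓ : δ < ℓ) (hx : x ∈ markerCode n ℓ δ)
    {d : ℕ → ℕ} {y : List Bool} (hy : IsDelOutput n ℓ δ x d y)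
    (hj : j ∈ Finset.Icc 1 (n / ℓ - 1)) :
    markerDecode ℓ δ (window ℓ y (startIdx ℓ d j)) = d j := by
  obtain ⟨ys, hys, rfl⟩ := hy
  set y := ((List.range (n / ℓ)).map fun m => ys (m + 1)).flatten
  obtain ⟨hj1, hjb⟩ := Finset.mem_Icc.mp hj
  obtain ⟨hsub, hdj, hlen⟩ := hys j (Finset.mem_Icc.mpr ⟨hj1, by omega⟩)
  obtain ⟨hsub', hdj', hlen'⟩ := hys (j + 1) (Finset.mem_Icc.mpr ⟨by omega, by omega⟩)
  have hwindow : ∀ p < ℓ, p ≤ ℓ - d j → bitAt ℓ (window ℓ y (startIdx ℓ d j)) p =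
      (ys j ++ ys (j + 1)).getD p false := by
    intro p hp hpj
    have hstart := startIdx_eq_sum_length (ℓ := ℓ) (d := d) (j := j) (ys := ys)
      fun m hm => (hys m (Finset.Icc_subset_Icc_right (by omega) hm)).2.2
    have := List.getD_flatten_map_range_sum_length_add (fun m => ys (m + 1)) false
      (b := n / ℓ) (j := j - 1) (p := p) (by omega) (by simp only [Nat.sub_add_cancel hj1]; omega)
    rw [bitAt, dif_pos hp, window, hstart]
    simpa only [Nat.sub_add_cancel hj1] using this
  refine markerDecode_eq hdj hδℓ.le (fun p hp hpj => ?_) (fun hd0 => ?_)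
  · rw [hwindow p (by omega) (by omega), List.getD_append _ _ _ _ (by omega)]
    exact getD_of_sublist_blockList_eq_true hx hj hsub hp (by omega)
  · rw [hwindow _ (by omega) le_rfl, List.getD_append_right _ _ _ _ (by omega), hlen,
      Nat.sub_self]
    exact getD_zero_of_sublist_blockList_eq_false hx (Finset.mem_Icc.mpr ⟨by omega, by omega⟩)
      hsub' (by omega) (by omega)

end markerCode

theorem markerCode_block_decodable_general
    (n ℓ δ : ℕ) (hℓ : 2 * δ < ℓ) :
    BlockDecodable n ℓ δ (markerCode n ℓ δ) ∧
    (∀ w : Fin ℓ → Bool, markerDecode ℓ δ w ≤ δ) ∧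
    (∀ x ∈ markerCode n ℓ δ, ∀ d : ℕ → ℕ, ∀ y : List Bool,
      IsDelOutput n ℓ δ x d y →
      ∀ j ∈ Finset.Icc 1 (n / ℓ - 1),
        markerDecode ℓ δ (window ℓ y (startIdx ℓ d j)) = d j) := by
  have hdecode : ∀ x ∈ markerCode n ℓ δ, ∀ d : ℕ → ℕ, ∀ y : List Bool,
      IsDelOutput n ℓ δ x d y → ∀ j ∈ Finset.Icc 1 (n / ℓ - 1),
        markerDecode ℓ δ (window ℓ y (startIdx ℓ d j)) = d j :=
    fun _ hx _ _ hy _ hj => markerCode.markerDecode_window_startIdx (by omega) hx hy hj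
  exact ⟨⟨fun _ => markerDecode ℓ δ, fun _ => markerDecode_le ℓ δ, hdecode⟩,
    markerDecode_le ℓ δ, hdecode⟩

/-- The marker code is block-by-block decodable, and moreover the
explicit map markerDecode works as the decoder of every block. -/
theorem markerCode_block_decodable
    (n ℓ δ : ℕ) (hδ : 0 < δ) (hℓ : 2 * δ < ℓ) (hℓn : ℓ ≤ n / 2) (hdvd : ℓ ∣ n) :
    BlockDecodable n ℓ δ (markerCode n ℓ δ) ∧
    (∀ w : Fin ℓ → Bool, markerDecode ℓ δ w ≤ δ) ∧
    (∀ x ∈ markerCode n ℓ δ, ∀ d : ℕ → ℕ, ∀ y : List Bool,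
      IsDelOutput n ℓ δ x d y →
      ∀ j ∈ Finset.Icc 1 (n / ℓ - 1),
        markerDecode ℓ δ (window ℓ y (startIdx ℓ d j)) = d j) :=
  markerCode_block_decodable_general n ℓ δ hℓ
end

section
/- Let ℓ, δ, d₁ be integers with 2δ < ℓ and 0 ≤ d₁ ≤ δ. Let u ∈ 𝔽₂^ℓ have its last δ bits all equal to 1, let v ∈ 𝔽₂^ℓ have its first δ+1 bits all equal to 0, let u′ be a subsequence of u of length ℓ − d₁, let v′ be a subsequence of v of length at least ℓ − δ, and set w = ⟨u′, v′⟩ (concatenation). Then: (a) d₁ = 0 if and only if w_i = 1 for all i ∈ {ℓ−δ+1,…,ℓ}; and (b) if d₁ ≥ 1, then the least index i ∈ {ℓ−δ+1,…,ℓ} with w_i = 0 is i = ℓ − d₁ + 1. -/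
/-- Let u have its last delta bits all 1, v have its first delta+1
bits all 0, u' a subsequence of u of length l - d1 and v' a subsequence of v of
length at least l - delta, and w = u' ++ v'. Then (a) d1 = 0 iff w_i = 1 for all
i in [l-delta+1, l]; and (b) if d1 >= 1 then the least i in [l-delta+1, l] with
w_i = 0 is i = l - d1 + 1. -/
theorem marker_window_decoding
    (ℓ δ d₁ : ℕ) (hℓ : 2 * δ < ℓ) (hd : d₁ ≤ δ)
    (u v u' v' : List Bool) (hu : u.length = ℓ) (hv : v.length = ℓ)
    (hulast : ∀ i ∈ Finset.Icc (ℓ - δ + 1) ℓ, u.getD (i - 1) false = true)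
    (hvfirst : ∀ i ∈ Finset.Icc 1 (δ + 1), v.getD (i - 1) false = false)
    (hu' : u'.Sublist u) (hu'len : u'.length = ℓ - d₁)
    (hv' : v'.Sublist v) (hv'len : ℓ - δ ≤ v'.length) :
    (d₁ = 0 ↔ ∀ i ∈ Finset.Icc (ℓ - δ + 1) ℓ, (u' ++ v').getD (i - 1) false = true) ∧
    (1 ≤ d₁ →
      (u' ++ v').getD (ℓ - d₁ + 1 - 1) false = false ∧
      ∀ i ∈ Finset.Icc (ℓ - δ + 1) (ℓ - d₁), (u' ++ v').getD (i - 1) false = true) := by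
  -- elements of u at 0-based indices ≥ ℓ - δ are true
  have hutail : ∀ x ∈ u.drop (ℓ - δ), x = true := by
    intro x hx
    obtain ⟨m, hm, rfl⟩ := List.getElem_of_mem hx
    rw [List.getElem_drop]
    have h1 : ℓ - δ + m + 1 ∈ Finset.Icc (ℓ - δ + 1) ℓ := by
      simp only [List.length_drop, hu] at hm
      simp only [Finset.mem_Icc]; omega
    have := hulast _ h1
    rwa [Nat.add_sub_cancel, List.getD_eq_getElem] at this
  -- all entries of u' from index ℓ - δ on are true
  have hu'true : ∀ j, ℓ - δ ≤ j → (hj : j < u'.length) → u'[j] = true := by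
    intro j hj hjlt
    have hsub : (u'.drop (ℓ - δ)).Sublist (u.drop (ℓ - δ)) := hu'.drop _
    have hmem : u'[j] ∈ u'.drop (ℓ - δ) := by
      have hlt : j - (ℓ - δ) < (u'.drop (ℓ - δ)).length := by
        simp only [List.length_drop]; omega
      have : (u'.drop (ℓ - δ))[j - (ℓ - δ)] = u'[j] := by
        rw [List.getElem_drop]; congr 1; omega
      rw [← this]; exact List.getElem_mem hlt
    exact hutail _ (hsub.subset hmem)
  -- v'.getD 0 = false
  have hv'0 : v'.getD 0 false = false := by
    have hsplit : v'.Sublist (v.take (δ + 1) ++ v.drop (δ + 1)) := by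
      rwa [List.take_append_drop]
    obtain ⟨s₁, s₂, heq, hs₁, hs₂⟩ := List.sublist_append_iff.mp hsplit
    have hs₂len : s₂.length ≤ ℓ - (δ + 1) := by
      have := hs₂.length_le; simpa [hv] using this
    have hs₁pos : 0 < s₁.length := by
      have : v'.length = s₁.length + s₂.length := by rw [heq, List.length_append]
      omega
    have hs₁false : ∀ x ∈ s₁, x = false := by
      intro x hx
      have hxv : x ∈ v.take (δ + 1) := hs₁.subset hx
      obtain ⟨m, hm, rfl⟩ := List.getElem_of_mem hxv
      rw [List.getElem_take]
      have hmlt : m < δ + 1 := by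
        simp only [List.length_take] at hm; omega
      have h1 : m + 1 ∈ Finset.Icc 1 (δ + 1) := by simp only [Finset.mem_Icc]; omega
      have := hvfirst _ h1
      rwa [Nat.add_sub_cancel, List.getD_eq_getElem] at this
    rw [heq, List.getD_append _ _ _ 0 hs₁pos, List.getD_eq_getElem _ _ hs₁pos]
    exact hs₁false _ (List.getElem_mem hs₁pos)
  have hδℓ : δ < ℓ := by omega
  -- the "true part": indices i-1 < ℓ - d₁
  have htrue : ∀ i, ℓ - δ + 1 ≤ i → i ≤ ℓ - d₁ → (u' ++ v').getD (i - 1) false = true := by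
    intro i h1 h2
    have hlt : i - 1 < u'.length := by rw [hu'len]; omega
    rw [List.getD_append _ _ _ _ hlt, List.getD_eq_getElem _ _ hlt]
    exact hu'true _ (by omega) hlt
  -- the "false part"
  have hfalse : 1 ≤ d₁ → (u' ++ v').getD (ℓ - d₁ + 1 - 1) false = false := by
    intro hd1
    have : ℓ - d₁ + 1 - 1 = u'.length + 0 := by omega
    rw [this, List.getD_append_right _ _ _ _ (by omega)]
    simpa using hv'0
  constructor
  · constructor
    · rintro rfl i hi
      simp only [Finset.mem_Icc] at hi
      exact htrue i hi.1 (by omega)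
    · intro hall
      by_contra hne
      have hd1 : 1 ≤ d₁ := by omega
      have h1 := hall (ℓ - d₁ + 1) (by simp only [Finset.mem_Icc]; omega)
      have h2 := hfalse hd1
      rw [h1] at h2
      simp at h2
  · intro hd1
    refine ⟨hfalse hd1, ?_⟩
    intro i hi
    simp only [Finset.mem_Icc] at hi
    exact htrue i hi.1 hi.2
end

section
/- Let n, ℓ, δ be positive integers with 2δ < ℓ ≤ n/2, ℓ ∣ n, b = n/ℓ ≥ 3, and suppose 2δ divides ℓ. Let C ⊆ 𝔽₂ⁿ be a code that detects up to δ deletions per block, let x ∈ C, and let j ∈ {1,…,b−2} be such that both boundary markers of x at boundaries j and j+1 are of type ⟨1^δ, 0^δ⟩, i.e., x_{[jℓ−δ+1, jℓ]} = 1^δ, x_{[jℓ+1, jℓ+δ]} = 0^δ, x_{[(j+1)ℓ−δ+1, (j+1)ℓ]} = 1^δ, and x_{[(j+1)ℓ+1, (j+1)ℓ+δ]} = 0^δ. Then the middle part of block j+1 is not a periodic repetition of ⟨1^δ 0^δ⟩: x_{[jℓ+δ+1, (j+1)ℓ−δ]} ≠ ⟨1^δ 0^δ⟩ repeated (ℓ−2δ)/(2δ)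 times. -/
/-- auxiliary: modify the family of blocks by taking `a` from block `j` and dropping `c` from block `j+1`. -/
def modL (L : ℕ → List Bool) (a c : ℕ) (j : ℕ) (m : ℕ) : List Bool :=
  if m = j then (L j).take a else if m = j + 1 then (L (j + 1)).drop c else L m

/-- auxiliary deletion pattern -/
def dpat (δ j m : ℕ) : ℕ := if m = j ∨ m = j + 1 then δ else 0

lemma modL_self (L : ℕ → List Bool) (a c j : ℕ) : modL L a c j j = (L j).take a := by
  unfold modL; rw [if_pos rfl]

lemma modL_succ (L : ℕ → List Bool) (a c j : ℕ) : modL L a c j (j + 1) = (L (j + 1)).drop c := by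
  unfold modL; rw [if_neg (by omega), if_pos rfl]

lemma modL_other (L : ℕ → List Bool) (a c j m : ℕ) (hm1 : m ≠ j) (hm2 : m ≠ j + 1) :
    modL L a c j m = L m := by
  unfold modL; rw [if_neg hm1, if_neg hm2]

lemma isdel_modL (n ℓ δ : ℕ) (x : Fin n → Bool) (j : ℕ) :
    IsDelOutput n ℓ δ x (dpat δ j)
      (((List.range (n / ℓ)).map (fun m => modL (blockList n ℓ x) (ℓ - δ) δ j (m + 1))).flatten) := by
  refine ⟨modL (blockList n ℓ x) (ℓ - δ) δ j, fun m _ => ?_, rfl⟩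
  unfold dpat
  rcases eq_or_ne m j with rfl | hm1
  · rw [modL_self, if_pos (Or.inl rfl)]
    exact ⟨List.take_sublist _ _, le_refl δ, by simp [blockList]; try omega⟩
  · rcases eq_or_ne m (j + 1) with rfl | hm2
    · rw [modL_succ, if_pos (Or.inr rfl)]
      exact ⟨List.drop_sublist _ _, le_refl δ, by simp [blockList]⟩
    · rw [modL_other _ _ _ _ _ hm1 hm2, if_neg (by tauto)]
      exact ⟨List.Sublist.refl _, Nat.zero_le δ, by simp [blockList]⟩

lemma flat3 {α : Type*} (f : ℕ → List α) (p q : ℕ) :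
    ((List.range (p + 3 + q)).map f).flatten =
      ((List.range p).map f).flatten ++ (f p ++ f (p + 1) ++ f (p + 2)) ++
      ((List.range q).map (fun m => f (p + 3 + m))).flatten := by
  rw [List.range_add, List.map_append, List.flatten_append,
      List.range_add, List.map_append, List.flatten_append]
  have h3 : List.range 3 = [0, 1, 2] := rfl
  simp [h3, List.map_map, Function.comp_def]


/-- If 2d divides l, b >= 3, and both boundary markers of a codeword
x at boundaries j and j+1 are of type (1^d, 0^d), then the middle part of block j+1
is not a periodic repetition of 1^d 0^d. -/
theorem middle_not_periodic
    (n ℓ δ : ℕ) (hδ : 0 < δ) (hℓ : 2 * δ < ℓ) (hℓn : ℓ ≤ n / 2) (hdvd : ℓ ∣ n)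
    (hb : 3 ≤ n / ℓ) (hd : 2 * δ ∣ ℓ)
    (C : Set (Fin n → Bool)) (hC : Detects n ℓ δ C)
    (x : Fin n → Bool) (hx : x ∈ C)
    (j : ℕ) (hj : j ∈ Finset.Icc 1 (n / ℓ - 2))
    (h1 : ∀ i ∈ Finset.Icc (j * ℓ - δ + 1) (j * ℓ), bitAt n x (i - 1) = true)
    (h2 : ∀ i ∈ Finset.Icc (j * ℓ + 1) (j * ℓ + δ), bitAt n x (i - 1) = false)
    (h3 : ∀ i ∈ Finset.Icc ((j + 1) * ℓ - δ + 1) ((j + 1) * ℓ), bitAt n x (i - 1) = true)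
    (h4 : ∀ i ∈ Finset.Icc ((j + 1) * ℓ + 1) ((j + 1) * ℓ + δ), bitAt n x (i - 1) = false) :
    ¬ (∀ i ∈ Finset.Icc 1 (ℓ - 2 * δ),
        bitAt n x (j * ℓ + δ + i - 1) = decide ((i - 1) % (2 * δ) < δ)) := by
  intro hper
  obtain ⟨c, hc⟩ := hd
  rw [Finset.mem_Icc] at hj
  obtain ⟨hj1, hj2⟩ := hj
  have hjge : ℓ ≤ j * ℓ := Nat.le_mul_of_pos_left ℓ (by omega)
  have e1 : (j + 1) * ℓ = j * ℓ + ℓ := by ring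
  have e2 : (j + 2) * ℓ = j * ℓ + 2 * ℓ := by ring
  have e0 : (j - 1) * ℓ + ℓ = j * ℓ := by
    rcases Nat.exists_eq_add_of_le hj1 with ⟨k, rfl⟩
    simp [Nat.add_sub_cancel_left]; ring
  have f1 : (j + 1 - 1) * ℓ = j * ℓ := by norm_num
  have f2 : (j + 2 - 1) * ℓ = j * ℓ + ℓ := by
    rw [show j + 2 - 1 = j + 1 by omega]; ring
  -- the full periodicity fact around block j+1
  have hP : ∀ o, o < ℓ + 2 * δ → bitAt n x (j * ℓ - δ + o) = decide (o % (2 * δ) < δ) := by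
    intro o ho
    rcases Nat.lt_or_ge o δ with h | h
    · have hbit := h1 (j * ℓ - δ + o + 1) (Finset.mem_Icc.mpr ⟨by omega, by omega⟩)
      rw [Nat.add_sub_cancel] at hbit
      rw [hbit, Nat.mod_eq_of_lt (by omega)]
      simp [h]
    · rcases Nat.lt_or_ge o (2 * δ) with h' | h'
      · have hbit := h2 (j * ℓ - δ + o + 1) (Finset.mem_Icc.mpr ⟨by omega, by omega⟩)
        rw [Nat.add_sub_cancel] at hbit
        rw [hbit, Nat.mod_eq_of_lt (by omega)]
        simp; omega
      · rcases Nat.lt_or_ge o ℓ with h'' | h''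
        · have hbit := hper (o - 2 * δ + 1) (Finset.mem_Icc.mpr ⟨by omega, by omega⟩)
          rw [show j * ℓ + δ + (o - 2 * δ + 1) - 1 = j * ℓ - δ + o by omega,
              Nat.add_sub_cancel] at hbit
          have em : o % (2 * δ) = (o - 2 * δ) % (2 * δ) := by
            conv_lhs => rw [← Nat.sub_add_cancel h']
            rw [Nat.add_mod_right]
          rw [hbit, em]
        · have em : o % (2 * δ) = (o - ℓ) % (2 * δ) := by
            conv_lhs => rw [show o = (o - ℓ) + 2 * δ * c by rw [← hc]; omega]
            rw [Nat.add_mul_mod_self_left]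
          rcases Nat.lt_or_ge o (ℓ + δ) with h3' | h3'
          · have hbit := h3 (j * ℓ - δ + o + 1) (Finset.mem_Icc.mpr ⟨by omega, by omega⟩)
            rw [Nat.add_sub_cancel] at hbit
            rw [hbit, em, Nat.mod_eq_of_lt (by omega)]
            simp; omega
          · have hbit := h4 (j * ℓ - δ + o + 1) (Finset.mem_Icc.mpr ⟨by omega, by omega⟩)
            rw [Nat.add_sub_cancel] at hbit
            rw [hbit, em, Nat.mod_eq_of_lt (by omega)]
            simp; omega
  have hshift : ∀ i, j * ℓ - δ ≤ i → i < (j + 1) * ℓ - δ →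
      bitAt n x (i + 2 * δ) = bitAt n x i := by
    intro i hi1 hi2
    have ea := hP (i - (j * ℓ - δ)) (by omega)
    have eb := hP (i - (j * ℓ - δ) + 2 * δ) (by omega)
    rw [show j * ℓ - δ + (i - (j * ℓ - δ)) = i by omega] at ea
    rw [show j * ℓ - δ + (i - (j * ℓ - δ) + 2 * δ) = i + 2 * δ by omega] at eb
    rw [ea, eb, Nat.add_mod_right]
  -- the middle three-block equality
  have hmid : (blockList n ℓ x j).take (ℓ - δ) ++ (blockList n ℓ x (j + 1)).drop δ ++
        blockList n ℓ x (j + 2)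
      = blockList n ℓ x j ++ (blockList n ℓ x (j + 1)).take (ℓ - δ) ++
        (blockList n ℓ x (j + 2)).drop δ := by
    have key : ∀ p q : ℕ, j * ℓ - δ ≤ q → q < (j + 1) * ℓ - δ → p = q + 2 * δ →
        bitAt n x p = bitAt n x q := by
      intro p q hq1 hq2 hpq; subst hpq; exact hshift q hq1 hq2
    apply List.ext_getElem
    · simp [blockList]; omega
    · intro t ht1 ht2
      simp only [blockList, List.length_append, List.length_take, List.length_drop,
        List.length_map, List.length_range] at ht1 ht2
      simp only [blockList, List.getElem_append, List.getElem_take, List.getElem_drop,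
        List.getElem_map, List.getElem_range, List.length_append, List.length_take,
        List.length_drop, List.length_map, List.length_range]
      have hmin : (ℓ - δ) ⊓ ℓ = ℓ - δ := by omega
      simp only [hmin] at ht1 ht2 ⊢
      split_ifs <;>
        first
          | (congr 1 <;> omega)
          | (exact key _ _ (by omega) (by omega) (by omega))
  -- the two outputs coincide
  have hflat : ((List.range (n / ℓ)).map
        (fun m => modL (blockList n ℓ x) (ℓ - δ) δ j (m + 1))).flatten
      = ((List.range (n / ℓ)).map
        (fun m => modL (blockList n ℓ x) (ℓ - δ) δ (j + 1) (m + 1))).flatten := by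
    have hsplit : n / ℓ = (j - 1) + 3 + (n / ℓ - (j + 2)) := by omega
    rw [hsplit, flat3, flat3]
    congr 1
    congr 1
    · refine congrArg List.flatten (List.map_congr_left fun m hm => ?_)
      rw [List.mem_range] at hm
      rw [modL_other _ _ _ _ _ (by omega) (by omega),
          modL_other _ _ _ _ _ (by omega) (by omega)]
    · rw [show j - 1 + 1 = j by omega, show j - 1 + 2 = j + 1 by omega]
      rw [modL_self, modL_succ,
          modL_other _ _ _ _ _ (by omega) (by omega),
          modL_other _ _ _ _ _ (by omega) (by omega),
          modL_self, modL_succ,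
          show (j : ℕ) + 1 + 1 = j + 2 by omega]
      exact hmid
    · refine congrArg List.flatten (List.map_congr_left fun m hm => ?_)
      rw [modL_other _ _ _ _ _ (by omega) (by omega),
          modL_other _ _ _ _ _ (by omega) (by omega)]
  have hA := isdel_modL n ℓ δ x j
  have hB0 := isdel_modL n ℓ δ x (j + 1)
  rw [← hflat] at hB0
  have hdd := hC x hx x hx (dpat δ j) (dpat δ (j + 1)) _ hA hB0 j
    (Finset.mem_Icc.mpr ⟨hj1, by omega⟩)
  unfold dpat at hdd
  rw [if_pos (Or.inl rfl), if_neg (by omega)] at hdd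
  omega
end
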